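/- arXiv:1405.6378 — 12 statements merged into one kernel-verified Lean document; each statement's English description precedes it below -/
import Mathlib

section
/- For any polynomial h ∈ ℝ[x], the polynomial E⁻¹(x·h(x)) evaluated with x replaced by x+1 equals E⁻¹((x+1)·h(x)), where E is the linear operator sending C(x,k) to x^k. -/
open Polynomial

/-- The polynomial binomial coefficient `C(x,k) = x(x-1)⋯(x-k+1)/k!` in `ℝ[x]`. -/
noncomputable def binomPoly (k : ℕ) : Polynomial ℝ :=
  Polynomial.C ((k.factorial : ℝ)⁻¹) * descPochhammer ℝ k

lemma descPochhammer_comp_succ (k : ℕ) :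
    (descPochhammer ℝ (k+1)).comp (Polynomial.X + 1)
      = (Polynomial.X + 1) * descPochhammer ℝ k := by
  rw [descPochhammer_succ_left, mul_comp, X_comp, comp_assoc]
  simp

lemma binomPoly_pascal (k : ℕ) :
    (binomPoly (k+1)).comp (Polynomial.X + 1) = binomPoly (k+1) + binomPoly k := by
  have h1 : descPochhammer ℝ (k+1) = descPochhammer ℝ k * (Polynomial.X - (k : Polynomial ℝ)) :=
    descPochhammer_succ_right ℝ k
  have hfac : ((k+1).factorial : ℝ) = (k+1) * k.factorial := by
    push_cast [Nat.factorial_succ]; ring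
  unfold binomPoly
  rw [mul_comp, C_comp, descPochhammer_comp_succ, h1]
  have hk1 : ((k:ℝ)+1) ≠ 0 := by positivity
  have hkf : (k.factorial : ℝ) ≠ 0 := Nat.cast_ne_zero.mpr k.factorial_ne_zero
  rw [hfac]
  have : ((((k:ℝ)+1) * k.factorial)⁻¹ : ℝ) = ((k:ℝ)+1)⁻¹ * (k.factorial : ℝ)⁻¹ := by
    rw [mul_inv]
  rw [this, map_mul]
  have key : (Polynomial.X + 1) * descPochhammer ℝ k
      = descPochhammer ℝ k * (Polynomial.X - (k : Polynomial ℝ))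
        + ((k:ℝ)+1) • descPochhammer ℝ k := by
    ring_nf
    simp [Polynomial.smul_eq_C_mul]
    ring
  rw [key, mul_add]
  congr 1
  rw [Polynomial.smul_eq_C_mul]
  simp only [← mul_assoc, ← map_mul]
  congr 2
  field_simp

/-- If `E` is the invertible linear operator on `ℝ[x]` with `E(C(x,k)) = x^k`, then
`(E⁻¹(x·h))(x+1) = E⁻¹((x+1)·h)` for every polynomial `h`. -/
theorem Einv_shift (E : Polynomial ℝ ≃ₗ[ℝ] Polynomial ℝ)
    (hE : ∀ k : ℕ, E (binomPoly k) = Polynomial.X ^ k) (h : Polynomial ℝ) :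
    (E.symm (Polynomial.X * h)).comp (Polynomial.X + 1)
      = E.symm ((Polynomial.X + 1) * h) := by
  have hsymm : ∀ k : ℕ, E.symm (Polynomial.X ^ k) = binomPoly k := by
    intro k; rw [← hE k, LinearEquiv.symm_apply_apply]
  induction h using Polynomial.induction_on' with
  | add p q hp hq =>
      rw [mul_add, map_add, add_comp, hp, hq, mul_add, map_add]
  | monomial n a =>
      rw [← Polynomial.C_mul_X_pow_eq_monomial, ← Polynomial.smul_eq_C_mul, mul_smul_comm, ← pow_succ', map_smul, smul_comp,
        hsymm, binomPoly_pascal, mul_smul_comm, add_mul, one_mul, ← pow_succ', map_smul,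
        map_add, hsymm, hsymm]
end

section
/- For every n ≥ 1 and variables x_1, ..., x_n: ∑_{k=0}^n (e_k(x)² − e_{k−1}(x)·e_{k+1}(x)) = e_n(x) · ∑_{k=0}^{⌊n/2⌋} C_k · e_{n−2k}(x_1 + 1/x_1, ..., x_n + 1/x_n), where C_k = (1/(k+1))·binomial(2k,k) is the k-th Catalan number, as an identity of rational functions (or after clearing denominators, of polynomials). -/
open Finset

/-- The `k`-th elementary symmetric function of `x₁, …, xₙ` (zero for `k > n`). -/
noncomputable def esym {n : ℕ} (x : Fin n → ℝ) (k : ℕ) : ℝ :=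
  ∑ s ∈ Finset.univ.powersetCard k, ∏ i ∈ s, x i

noncomputable def nestP {n : ℕ} (x : Fin n → ℝ) (p q : ℕ) : ℝ :=
  ∑ B ∈ (univ : Finset (Fin n)).powersetCard q, ∑ A ∈ B.powersetCard p,
    (∏ i ∈ A, x i) * (∏ i ∈ B, x i)

lemma catalan_choose (k : ℕ) (hk : 1 ≤ k) :
    (catalan k : ℝ) = (Nat.choose (2*k) k : ℝ) - (Nat.choose (2*k) (k-1) : ℝ) := by
  have h1 : (k + 1) * catalan k = Nat.choose (2*k) k := by
    rw [succ_mul_catalan_eq_centralBinom]; rfl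
  have h2 : Nat.choose (2*k) k * k = Nat.choose (2*k) (k-1) * (k+1) := by
    obtain ⟨j, rfl⟩ : ∃ j, k = j + 1 := ⟨k - 1, by omega⟩
    have h := Nat.choose_succ_right_eq (2*(j+1)) j
    have h3 : 2*(j+1) - j = j + 2 := by omega
    rw [h3] at h
    simpa using h
  have key : (k+1) * catalan k + (k+1) * Nat.choose (2*k) (k-1) = (k+1) * Nat.choose (2*k) k := by
    rw [h1]; nlinarith [h2]
  have hc : ((k:ℝ)+1) * ((catalan k : ℝ) + (Nat.choose (2*k) (k-1) : ℝ))
      = ((k:ℝ)+1) * (Nat.choose (2*k) k : ℝ) := by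
    have := congrArg (Nat.cast : ℕ → ℝ) key
    push_cast at this
    linarith [this]
  have hk1 : ((k:ℝ)+1) ≠ 0 := by positivity
  have := mul_left_cancel₀ hk1 hc
  linarith [this]

lemma esym_mul_esym {n : ℕ} (x : Fin n → ℝ) {a b : ℕ} (hab : a ≤ b) :
    esym x a * esym x b
      = ∑ i ∈ Finset.range (a+1), (Nat.choose (a+b-2*i) (a-i) : ℝ) * nestP x i (a+b-i) := by
  classical
  have hRHS : ∀ i ∈ Finset.range (a+1), (Nat.choose (a+b-2*i) (a-i) : ℝ) * nestP x i (a+b-i)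
      = ∑ B ∈ (univ : Finset (Fin n)).powersetCard (a+b-i), ∑ A ∈ B.powersetCard i,
          ∑ C ∈ (B \ A).powersetCard (a-i), (∏ j ∈ A, x j) * (∏ j ∈ B, x j) := by
    intro i hi
    rw [Finset.mem_range] at hi
    rw [nestP, Finset.mul_sum]
    refine Finset.sum_congr rfl fun B hB => ?_
    rw [Finset.mul_sum]
    refine Finset.sum_congr rfl fun A hA => ?_
    rw [Finset.mem_powersetCard] at hB hA
    have hcard : (B \ A).card = a + b - 2*i := by
      rw [Finset.card_sdiff_of_subset hA.1, hB.2, hA.2]; omega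
    rw [Finset.sum_const, ← hcard, Finset.card_powersetCard, hcard]
    simp [mul_comm]
  rw [Finset.sum_congr rfl hRHS]
  rw [esym, esym, Finset.sum_mul_sum]
  simp only [Finset.sum_sigma']
  refine Finset.sum_nbij'
    (fun p => (⟨(p.1 ∩ p.2).card, p.1 ∪ p.2, p.1 ∩ p.2, p.1 \ p.2⟩ :
      (_ : ℕ) × (_ : Finset (Fin n)) × (_ : Finset (Fin n)) × Finset (Fin n)))
    (fun r => (⟨r.2.2.1 ∪ r.2.2.2, r.2.1 \ r.2.2.2⟩ :
      (_ : Finset (Fin n)) × Finset (Fin n)))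
    ?_ ?_ ?_ ?_ ?_
  · -- bwd maps into RHS index set
    rintro ⟨S, T⟩ hp
    simp only [Finset.mem_sigma, Finset.mem_powersetCard, Finset.mem_range] at hp ⊢
    obtain ⟨⟨-, hS⟩, -, hT⟩ := hp
    have h1 : (S ∩ T).card ≤ S.card := Finset.card_le_card Finset.inter_subset_left
    have h2 : (S ∪ T).card + (S ∩ T).card = S.card + T.card := Finset.card_union_add_card_inter S T
    have h3 : (S ∩ T).card + (S \ T).card = S.card := Finset.card_inter_add_card_sdiff S T
    refine ⟨by omega, ⟨Finset.subset_univ _, by omega⟩,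
      ⟨Finset.inter_subset_union, trivial⟩, ?_, by omega⟩
    intro y hy
    simp only [Finset.mem_sdiff, Finset.mem_union, Finset.mem_inter] at hy ⊢
    tauto
  · -- fwd maps into LHS index set
    rintro ⟨i, B, A, C⟩ hr
    simp only [Finset.mem_sigma, Finset.mem_powersetCard, Finset.mem_range] at hr ⊢
    obtain ⟨hi, ⟨-, hB⟩, ⟨hAB, hA⟩, hC, hCc⟩ := hr
    have hCB : ∀ y ∈ C, y ∈ B ∧ y ∉ A := by
      intro y hy; have := hC hy; simpa [Finset.mem_sdiff] using this
    have hdisj : Disjoint A C := by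
      rw [Finset.disjoint_left]; intro y hyA hyC; exact (hCB y hyC).2 hyA
    have hCB' : C ⊆ B := fun y hy => (hCB y hy).1
    constructor
    · exact ⟨Finset.subset_univ _, by rw [Finset.card_union_of_disjoint hdisj, hA, hCc]; omega⟩
    · exact ⟨Finset.subset_univ _, by rw [Finset.card_sdiff_of_subset hCB', hB, hCc]; omega⟩
  · -- left inverse
    rintro ⟨S, T⟩ hp
    have e1 : (S ∩ T) ∪ (S \ T) = S := by
      ext y; simp only [Finset.mem_union, Finset.mem_inter, Finset.mem_sdiff]; tauto
    have e2 : (S ∪ T) \ (S \ T) = T := by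
      ext y; simp only [Finset.mem_union, Finset.mem_sdiff]; tauto
    simp only [e1, e2]
  · -- right inverse
    rintro ⟨i, B, A, C⟩ hr
    simp only [Finset.mem_sigma, Finset.mem_powersetCard, Finset.mem_range] at hr
    obtain ⟨hi, ⟨-, hB⟩, ⟨hAB, hA⟩, hC, hCc⟩ := hr
    have hCB : ∀ y ∈ C, y ∈ B ∧ y ∉ A := by
      intro y hy; have := hC hy; simpa [Finset.mem_sdiff] using this
    have hAB' : ∀ y ∈ A, y ∈ B := fun y hy => hAB hy
    have e1 : (A ∪ C) ∩ (B \ C) = A := by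
      ext y
      have h1 := hCB y; have h2 := hAB' y
      simp only [Finset.mem_inter, Finset.mem_union, Finset.mem_sdiff] at *
      tauto
    have e2 : (A ∪ C) ∪ (B \ C) = B := by
      ext y
      have h1 := hCB y; have h2 := hAB' y
      simp only [Finset.mem_union, Finset.mem_sdiff] at *
      by_cases hc : y ∈ C <;> tauto
    have e3 : (A ∪ C) \ (B \ C) = C := by
      ext y
      have h1 := hCB y; have h2 := hAB' y
      simp only [Finset.mem_union, Finset.mem_sdiff] at *
      by_cases hc : y ∈ C <;> tauto
    simp only [e1, e2, e3, hA]
  · -- values agree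
    rintro ⟨S, T⟩ hp
    dsimp only
    rw [← Finset.prod_union_inter]
    ring

lemma esym_top {n : ℕ} (x : Fin n → ℝ) : esym x n = ∏ i, x i := by
  have h : (univ : Finset (Fin n)).powersetCard n = {univ} := by
    have h2 := Finset.powersetCard_self (univ : Finset (Fin n))
    simpa using h2
  rw [esym, h, Finset.sum_singleton]

lemma esym_mul_esym_inv {n : ℕ} (x : Fin n → ℝ) (hx : ∀ i, x i ≠ 0) {m : ℕ} (hm : m ≤ n) :
    esym x n * esym (fun i => x i + (x i)⁻¹) m
      = ∑ i ∈ Finset.range (m+1), nestP x i (n-m+i) := by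
  classical
  rw [esym_top, esym, Finset.mul_sum]
  have step : ∀ S ∈ (univ : Finset (Fin n)).powersetCard m,
      (∏ i, x i) * ∏ i ∈ S, (x i + (x i)⁻¹)
        = ∑ T ∈ S.powerset, (∏ i ∈ T, x i) * (∏ i ∈ T ∪ Sᶜ, x i) := by
    intro S hS
    rw [Finset.prod_add, Finset.mul_sum]
    refine Finset.sum_congr rfl fun T hT => ?_
    rw [Finset.mem_powerset] at hT
    have hTS : T ∪ Sᶜ = univ \ (S \ T) := by
      ext y
      simp only [Finset.mem_union, Finset.mem_compl, Finset.mem_sdiff, Finset.mem_univ,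
        true_and]
      tauto
    have hsub : S \ T ⊆ univ := Finset.subset_univ _
    have hprod : (∏ i, x i) = (∏ i ∈ univ \ (S \ T), x i) * ∏ i ∈ S \ T, x i :=
      (Finset.prod_sdiff hsub).symm
    rw [hTS, hprod, Finset.prod_inv_distrib]
    have hne : (∏ i ∈ S \ T, x i) ≠ 0 := Finset.prod_ne_zero_iff.mpr fun i _ => hx i
    field_simp
  rw [Finset.sum_congr rfl step]
  -- flatten into sigma sums
  simp only [nestP]
  simp only [Finset.sum_sigma']
  refine Finset.sum_nbij'
    (fun p => (⟨p.2.card, p.2 ∪ p.1ᶜ, p.2⟩ :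
      (_ : ℕ) × (_ : Finset (Fin n)) × Finset (Fin n)))
    (fun r => (⟨r.2.2 ∪ r.2.1ᶜ, r.2.2⟩ : (_ : Finset (Fin n)) × Finset (Fin n)))
    ?_ ?_ ?_ ?_ ?_
  · rintro ⟨S, T⟩ hp
    simp only [Finset.mem_sigma, Finset.mem_powersetCard, Finset.mem_powerset,
      Finset.mem_range] at hp ⊢
    obtain ⟨⟨-, hS⟩, hTS⟩ := hp
    have hTc : T.card ≤ S.card := Finset.card_le_card hTS
    have hdisj : Disjoint T Sᶜ := by
      rw [Finset.disjoint_left]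
      intro y hyT hyc
      exact (Finset.mem_compl.mp hyc) (hTS hyT)
    have hSc : (Sᶜ : Finset (Fin n)).card = n - S.card := by
      rw [Finset.card_compl]; simp
    refine ⟨by omega, ⟨Finset.subset_univ _, ?_⟩, Finset.subset_union_left, trivial⟩
    rw [Finset.card_union_of_disjoint hdisj, hSc, hS]
    omega
  · rintro ⟨i, B, A⟩ hr
    simp only [Finset.mem_sigma, Finset.mem_powersetCard, Finset.mem_powerset,
      Finset.mem_range] at hr ⊢
    obtain ⟨hi, ⟨-, hB⟩, hAB, hA⟩ := hr
    have hdisj : Disjoint A Bᶜ := by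
      rw [Finset.disjoint_left]
      intro y hyA hyc
      exact (Finset.mem_compl.mp hyc) (hAB hyA)
    have hBc : (Bᶜ : Finset (Fin n)).card = n - B.card := by
      rw [Finset.card_compl]; simp
    refine ⟨⟨Finset.subset_univ _, ?_⟩, Finset.subset_union_left⟩
    rw [Finset.card_union_of_disjoint hdisj, hBc, hB, hA]
    omega
  · rintro ⟨S, T⟩ hp
    simp only [Finset.mem_sigma, Finset.mem_powersetCard, Finset.mem_powerset,
      Finset.mem_range] at hp
    obtain ⟨⟨-, hS⟩, hTS⟩ := hp
    have e1 : T ∪ (T ∪ Sᶜ)ᶜ = S := by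
      ext y
      have h := @hTS y
      simp only [Finset.mem_union, Finset.mem_compl, Finset.mem_sdiff] at *
      by_cases hy : y ∈ T <;> tauto
    simp only [e1]
  · rintro ⟨i, B, A⟩ hr
    simp only [Finset.mem_sigma, Finset.mem_powersetCard, Finset.mem_powerset,
      Finset.mem_range] at hr
    obtain ⟨hi, ⟨-, hB⟩, hAB, hA⟩ := hr
    have e1 : A ∪ (A ∪ Bᶜ)ᶜ = B := by
      ext y
      have h := @hAB y
      simp only [Finset.mem_union, Finset.mem_compl] at *
      by_cases hy : y ∈ A <;> tauto
    simp only [e1, hA]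
  · rintro ⟨S, T⟩ hp
    rfl


lemma step1 (f : ℕ → ℕ → ℝ) (n : ℕ) :
    ∑ k ∈ Finset.range (n+1), ∑ i ∈ Finset.range (k+1), f i (k-i)
      = ∑ i ∈ Finset.range (n+1), ∑ j ∈ Finset.range (n+1-i), f i j := by
  have h1 : ∀ k ∈ Finset.range (n+1), ∑ i ∈ Finset.range (k+1), f i (k-i)
      = ∑ i ∈ Finset.range (n+1), if i ≤ k then f i (k-i) else 0 := by
    intro k hk
    rw [Finset.mem_range] at hk
    calc ∑ i ∈ Finset.range (k+1), f i (k-i)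
        = ∑ i ∈ Finset.range (k+1), if i ≤ k then f i (k-i) else 0 := by
          refine Finset.sum_congr rfl fun i hi => ?_
          rw [Finset.mem_range] at hi
          rw [if_pos (by omega)]
      _ = ∑ i ∈ Finset.range (n+1), if i ≤ k then f i (k-i) else 0 := by
          refine Finset.sum_subset (Finset.range_subset_range.mpr (by omega)) fun i _ hi => ?_
          rw [Finset.mem_range] at hi
          rw [if_neg (by omega)]
  rw [Finset.sum_congr rfl h1, Finset.sum_comm]
  refine Finset.sum_congr rfl fun i hi => ?_
  rw [← Finset.sum_filter]
  have hf : (Finset.range (n+1)).filter (fun k => i ≤ k) = Finset.Ico i (n+1) := by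
    ext k; simp [Nat.lt_succ_iff, and_comm]
  rw [hf, Finset.sum_Ico_eq_sum_range]
  refine Finset.sum_congr (by rfl) fun j hj => ?_
  congr 1
  omega

lemma tri_sq (f : ℕ → ℕ → ℝ) (n : ℕ) :
    ∑ i ∈ Finset.range (n+1), ∑ j ∈ Finset.range (n+1-i), f i j
      = ∑ i ∈ Finset.range (n+1), ∑ j ∈ Finset.range (n+1), if i + j ≤ n then f i j else 0 := by
  refine Finset.sum_congr rfl fun i hi => ?_
  rw [Finset.mem_range] at hi
  calc ∑ j ∈ Finset.range (n+1-i), f i j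
      = ∑ j ∈ Finset.range (n+1-i), if i + j ≤ n then f i j else 0 := by
        refine Finset.sum_congr rfl fun j hj => ?_
        rw [Finset.mem_range] at hj
        rw [if_pos (by omega)]
    _ = ∑ j ∈ Finset.range (n+1), if i + j ≤ n then f i j else 0 := by
        refine Finset.sum_subset (Finset.range_subset_range.mpr (by omega)) fun j _ hj => ?_
        rw [Finset.mem_range] at hj
        rw [if_neg (by omega)]

lemma tri_swap (f : ℕ → ℕ → ℝ) (n : ℕ) :
    ∑ i ∈ Finset.range (n+1), ∑ j ∈ Finset.range (n+1-i), f i j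
      = ∑ j ∈ Finset.range (n+1), ∑ i ∈ Finset.range (n+1-j), f i j := by
  rw [tri_sq, Finset.sum_comm, tri_sq (fun j i => f i j) n]
  refine Finset.sum_congr rfl fun j _ => Finset.sum_congr rfl fun i _ => ?_
  rw [Nat.add_comm]

lemma esym_zero {n : ℕ} (x : Fin n → ℝ) : esym x 0 = 1 := by
  rw [esym, Finset.powersetCard_zero, Finset.sum_singleton, Finset.prod_empty]

lemma nestP_zero_of_big {n : ℕ} (x : Fin n → ℝ) {p q : ℕ} (h : n < q) : nestP x p q = 0 := by
  rw [nestP]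
  have : (univ : Finset (Fin n)).powersetCard q = ∅ :=
    Finset.powersetCard_eq_empty.mpr (by simpa using h)
  rw [this, Finset.sum_empty]

lemma nestP_zero_zero {n : ℕ} (x : Fin n → ℝ) : nestP x 0 0 = 1 := by
  rw [nestP, Finset.powersetCard_zero, Finset.sum_singleton, Finset.powersetCard_zero,
    Finset.sum_singleton, Finset.prod_empty, mul_one]

lemma key_k {n : ℕ} (x : Fin n → ℝ) (k : ℕ) (hk : 1 ≤ k) :
    esym x k ^ 2 - esym x (k-1) * esym x (k+1)
      = ∑ i ∈ Finset.range (k+1), (catalan (k-i) : ℝ) * nestP x i (2*k-i) := by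
  have h1 : esym x k ^ 2
      = ∑ i ∈ Finset.range (k+1), (Nat.choose (2*k-2*i) (k-i) : ℝ) * nestP x i (2*k-i) := by
    rw [sq, esym_mul_esym x (le_refl k)]
    refine Finset.sum_congr rfl fun i hi => ?_
    have e1 : k + k = 2*k := by omega
    rw [e1]
  have h2 : esym x (k-1) * esym x (k+1)
      = ∑ i ∈ Finset.range k, (Nat.choose (2*k-2*i) (k-1-i) : ℝ) * nestP x i (2*k-i) := by
    rw [esym_mul_esym x (by omega : k-1 ≤ k+1)]
    have e1 : (k-1) + (k+1) = 2*k := by omega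
    have e2 : k - 1 + 1 = k := by omega
    rw [e1, e2]
  rw [h1, h2, Finset.sum_range_succ]
  have e3 : 2*k - 2*k = 0 := by omega
  have e4 : k - k = 0 := by omega
  have e5 : 2*k - k = k := by omega
  rw [e3, e4, e5, Nat.choose_zero_right]
  rw [Finset.sum_range_succ (fun i => (catalan (k-i) : ℝ) * nestP x i (2*k-i)) k]
  simp only [e4, e5, catalan_zero]
  rw [add_sub_right_comm]
  congr 1
  rw [← Finset.sum_sub_distrib]
  refine Finset.sum_congr rfl fun i hi => ?_
  rw [Finset.mem_range] at hi
  rw [← sub_mul]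
  congr 1
  have hki : 1 ≤ k - i := by omega
  rw [catalan_choose (k-i) hki]
  have e6 : 2*(k-i) = 2*k - 2*i := by omega
  have e7 : k - i - 1 = k - 1 - i := by omega
  rw [e6, e7]

/-- For `n ≥ 1` and nonzero reals `x₁, …, xₙ`:
`∑_{k=0}^n (e_k(x)² − e_{k−1}(x)e_{k+1}(x))
   = e_n(x) · ∑_{k=0}^{⌊n/2⌋} C_k · e_{n−2k}(x + 1/x)`,
where `C_k` is the `k`-th Catalan number and `e_{-1} := 0`. -/
theorem esymm_catalan_identity (n : ℕ) (hn : 1 ≤ n) (x : Fin n → ℝ)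
    (hx : ∀ i, x i ≠ 0) :
    ∑ k ∈ Finset.range (n + 1),
        ((esym x k) ^ 2 - (if k = 0 then 0 else esym x (k - 1) * esym x (k + 1)))
      = esym x n * ∑ k ∈ Finset.range (n / 2 + 1),
          (catalan k : ℝ) * esym (fun i => x i + (x i)⁻¹) (n - 2 * k) := by
  classical
  have hzero : ∀ i j : ℕ, n < i + 2*j → (catalan j : ℝ) * nestP x i (i + 2*j) = 0 := by
    intro i j h
    rw [nestP_zero_of_big x h, mul_zero]
  -- LHS transformation
  have hterm : ∀ k ∈ Finset.range (n+1),
      ((esym x k) ^ 2 - (if k = 0 then 0 else esym x (k - 1) * esym x (k + 1)))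
        = ∑ i ∈ Finset.range (k+1), (catalan (k-i) : ℝ) * nestP x i (i + 2*(k-i)) := by
    intro k hk
    have hsum : ∑ i ∈ Finset.range (k+1), (catalan (k-i) : ℝ) * nestP x i (i + 2*(k-i))
        = ∑ i ∈ Finset.range (k+1), (catalan (k-i) : ℝ) * nestP x i (2*k-i) := by
      refine Finset.sum_congr rfl fun i hi => ?_
      rw [Finset.mem_range] at hi
      have : i + 2*(k-i) = 2*k - i := by omega
      rw [this]
    rw [hsum]
    rcases Nat.eq_zero_or_pos k with rfl | hk1
    · simp [esym_zero, nestP_zero_zero]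
    · rw [if_neg (by omega)]
      exact key_k x k hk1
  rw [Finset.sum_congr rfl hterm]
  have T1 := step1 (fun i j => (catalan j : ℝ) * nestP x i (i + 2*j)) n
  have T2 := tri_swap (fun i j => (catalan j : ℝ) * nestP x i (i + 2*j)) n
  rw [T1, T2]
  -- RHS transformation
  rw [Finset.mul_sum]
  have hR : ∀ j ∈ Finset.range (n/2+1),
      esym x n * ((catalan j : ℝ) * esym (fun i => x i + (x i)⁻¹) (n - 2*j))
        = ∑ i ∈ Finset.range (n-2*j+1), (catalan j : ℝ) * nestP x i (i + 2*j) := by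
    intro j hj
    rw [Finset.mem_range] at hj
    have hm : n - 2*j ≤ n := by omega
    rw [mul_left_comm, esym_mul_esym_inv x hx hm, Finset.mul_sum]
    refine Finset.sum_congr rfl fun i hi => ?_
    have e : n - (n - 2*j) + i = i + 2*j := by omega
    rw [e]
  rw [Finset.sum_congr rfl hR]
  -- extend RHS ranges
  symm
  calc ∑ j ∈ Finset.range (n/2+1), ∑ i ∈ Finset.range (n-2*j+1),
        (catalan j : ℝ) * nestP x i (i + 2*j)
      = ∑ j ∈ Finset.range (n/2+1), ∑ i ∈ Finset.range (n+1-j),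
        (catalan j : ℝ) * nestP x i (i + 2*j) := by
        refine Finset.sum_congr rfl fun j hj => ?_
        rw [Finset.mem_range] at hj
        refine Finset.sum_subset (Finset.range_subset_range.mpr (by omega)) fun i _ hi => ?_
        rw [Finset.mem_range] at hi
        exact hzero i j (by omega)
    _ = ∑ j ∈ Finset.range (n+1), ∑ i ∈ Finset.range (n+1-j),
        (catalan j : ℝ) * nestP x i (i + 2*j) := by
        refine Finset.sum_subset (Finset.range_subset_range.mpr (by omega)) fun j hj hj2 => ?_
        rw [Finset.mem_range] at hj hj2
        refine Finset.sum_eq_zero fun i hi => ?_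
        exact hzero i j (by omega)
end

section
/- For every n ≥ 0, the polynomial identity ∑_{k=0}^{⌊n/2⌋} C_k · binomial(n, 2k) · x^k (1+x)^{n−2k} = ∑_{k=0}^n (1/(n+1)) · binomial(n+1, k) · binomial(n+1, k+1) · x^k holds, where C_k is the k-th Catalan number. -/
/-!
Comparing coefficients of `x ^ m`, the left side contributes
`∑ₖ Cₖ·binom(n, 2k)·binom(n - 2k, m - k)`. The `k`-th summand is the multinomial coefficient
`n! / (k! (k+1)! (m-k)! (n-m-k)!)`, which is `binom(n+1, m)·binom(m, k)·binom(n+1-m, k+1) / (n+1)`;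
summing over `k` with Vandermonde's identity leaves `binom(n+1, m)·binom(n+1, m+1) / (n+1)`.
-/

open Polynomial Finset

theorem Nat.sum_range_choose_mul_choose_add_one (a b : ℕ) :
    ∑ k ∈ range (a + 1), a.choose k * b.choose (k + 1) = (a + b).choose (a + 1) := by
  rw [Nat.add_choose_eq,
    Finset.Nat.sum_antidiagonal_eq_sum_range_succ (fun i j => a.choose i * b.choose j),
    sum_range_succ _ (a + 1), Nat.choose_succ_self, zero_mul, add_zero, ← sum_range_reflect]
  refine sum_congr rfl fun k hk => ?_
  rw [mem_range] at hk
  rw [show a + 1 - 1 - k = a - k by omega, Nat.choose_symm (by omega : k ≤ a),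
    show a - k + 1 = a + 1 - k by omega]

theorem succ_mul_catalan_mul_choose_mul_choose {n m k : ℕ} (hkm : k ≤ m) :
    (n + 1) * (catalan k * n.choose (2 * k) * (n - 2 * k).choose (m - k))
      = (n + 1).choose m * (m.choose k * (n + 1 - m).choose (k + 1)) := by
  by_cases hmk : m + k ≤ n
  · have hcat : (catalan k : ℚ) = (2 * k).choose k / (k + 1) := by
      rw [eq_div_iff (by positivity), ← Nat.centralBinom_eq_two_mul_choose,
        ← succ_mul_catalan_eq_centralBinom]
      push_cast; ring
    rw [← Nat.cast_inj (R := ℚ)]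
    push_cast
    rw [hcat, Nat.cast_choose ℚ (by omega : k ≤ 2 * k), Nat.cast_choose ℚ (by omega : 2 * k ≤ n),
      Nat.cast_choose ℚ (by omega : m - k ≤ n - 2 * k), Nat.cast_choose ℚ (by omega : m ≤ n + 1),
      Nat.cast_choose ℚ hkm, Nat.cast_choose ℚ (by omega : k + 1 ≤ n + 1 - m),
      show n - 2 * k - (m - k) = n - m - k by omega, show n + 1 - m - (k + 1) = n - m - k by omega,
      show 2 * k - k = k by omega, Nat.factorial_succ n, Nat.factorial_succ k]
    field_simp
    push_cast
    ring
  · have hlhs : n.choose (2 * k) * (n - 2 * k).choose (m - k) = 0 := by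
      rcases le_or_gt (2 * k) n with h | h
      · rw [Nat.choose_eq_zero_of_lt (by omega : n - 2 * k < m - k), mul_zero]
      · rw [Nat.choose_eq_zero_of_lt h, zero_mul]
    rw [Nat.choose_eq_zero_of_lt (by omega : n + 1 - m < k + 1), mul_assoc, hlhs]
    simp

theorem succ_mul_sum_catalan_mul_choose_mul_choose (n m : ℕ) :
    (n + 1) * ∑ k ∈ range (m + 1), catalan k * n.choose (2 * k) * (n - 2 * k).choose (m - k)
      = (n + 1).choose m * (n + 1).choose (m + 1) := by
  rw [mul_sum, sum_congr rfl fun k hk =>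
      succ_mul_catalan_mul_choose_mul_choose (Nat.le_of_lt_succ (mem_range.1 hk)),
    ← mul_sum, Nat.sum_range_choose_mul_choose_add_one]
  rcases le_or_gt m (n + 1) with h | h
  · rw [Nat.add_sub_cancel' h]
  · rw [Nat.choose_eq_zero_of_lt h, zero_mul, zero_mul]

theorem Polynomial.coeff_C_mul_X_pow_mul_one_add_X_pow {R : Type*} [Semiring R] (c : R)
    (k j m : ℕ) :
    (C c * X ^ k * (1 + X) ^ j).coeff m = if k ≤ m then c * j.choose (m - k) else 0 := by
  rw [mul_assoc, X_pow_mul, ← mul_assoc, coeff_mul_X_pow', coeff_C_mul, coeff_one_add_X_pow]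

/-- The Catalan–Narayana polynomial identity in `ℝ[x]`:
`∑_{k=0}^{⌊n/2⌋} C_k·binom(n,2k)·x^k(1+x)^{n−2k}
  = ∑_{k=0}^n (1/(n+1))·binom(n+1,k)·binom(n+1,k+1)·x^k`. -/
theorem catalan_narayana_identity (n : ℕ) :
    ∑ k ∈ Finset.range (n / 2 + 1),
        Polynomial.C ((catalan k : ℝ) * (n.choose (2 * k) : ℝ)) *
          Polynomial.X ^ k * (1 + Polynomial.X) ^ (n - 2 * k)
      = ∑ k ∈ Finset.range (n + 1),
          Polynomial.C (((n : ℝ) + 1)⁻¹ * ((n + 1).choose k : ℝ)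
            * ((n + 1).choose (k + 1) : ℝ)) * Polynomial.X ^ k := by
  ext m
  simp only [finsetSum_coeff, coeff_C_mul_X_pow_mul_one_add_X_pow, coeff_C_mul_X_pow, sum_ite_eq,
    mem_range]
  have hlhs : ∑ k ∈ range (n / 2 + 1), (if k ≤ m then
        (catalan k : ℝ) * n.choose (2 * k) * ((n - 2 * k).choose (m - k) : ℝ) else 0)
      = ∑ k ∈ range (m + 1), (catalan k : ℝ) * n.choose (2 * k) * (n - 2 * k).choose (m - k) := by
    rw [← sum_filter]
    refine sum_subset (fun k hk => ?_) fun k hk hk' => ?_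
    · simp only [mem_filter, mem_range] at hk ⊢
      omega
    · simp only [mem_filter, mem_range, not_and] at hk hk'
      rw [Nat.choose_eq_zero_of_lt (by omega : n < 2 * k)]
      simp
  rw [hlhs, ite_eq_left_iff.2 fun h => by
    rw [Nat.choose_eq_zero_of_lt (by omega : n + 1 < m + 1), Nat.cast_zero, mul_zero],
    mul_assoc, eq_inv_mul_iff_mul_eq₀ (by positivity)]
  exact_mod_cast succ_mul_sum_catalan_mul_choose_mul_choose n m
end

section
/- For every n ≥ 2, all zeros of the polynomial q_n(x) = ∑_{k=0}^{⌊n/2⌋} C_k · binomial(n, 2k) · x^k are real and negative, where C_k is the k-th Catalan number (for n ≤ 1, q_n is constant). -/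
open Polynomial Finset

namespace QnAux

lemma iter_deriv_add {R : Type*} [CommRing R] (k : ℕ) (p q : R[X]) :
    derivative^[k] (p + q) = derivative^[k] p + derivative^[k] q := by
  induction k with
  | zero => simp
  | succ k ih => simp only [Function.iterate_succ_apply', ih, derivative_add]

/-- Iterated-derivative Leibniz rule with factor `X`. -/
lemma iter_deriv_X_mul {R : Type*} [CommRing R] (m : ℕ) (g : R[X]) :
    derivative^[m+1] (X * g) =
      X * derivative^[m+1] g + C ((m+1 : ℕ) : R) * derivative^[m] g := by
  induction m generalizing g with
  | zero =>
      simp [derivative_mul, C_eq_natCast]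
      ring
  | succ m ih =>
      have h1 : derivative^[m+2] (X * g)
          = derivative^[m+1] (derivative (X * g)) := by
        rw [Function.iterate_succ_apply]
      rw [h1, derivative_mul, derivative_X, one_mul, iter_deriv_add, ih (derivative g)]
      have h2 : ∀ j : ℕ, derivative^[j] (derivative g) = derivative^[j+1] g := by
        intro j; rw [← Function.iterate_succ_apply]
      rw [h2, h2]
      simp only [C_eq_natCast]
      push_cast
      ring

/-- Iterated-derivative Leibniz rule with factor `X^2-1`. -/
lemma iter_deriv_sq_mul {R : Type*} [CommRing R] (m : ℕ) (g : R[X]) :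
    derivative^[m+2] ((X^2 - 1) * g) =
      (X^2 - 1) * derivative^[m+2] g + C ((2*(m+2) : ℕ) : R) * (X * derivative^[m+1] g)
        + C (((m+2)*(m+1) : ℕ) : R) * derivative^[m] g := by
  induction m generalizing g with
  | zero =>
      simp [derivative_mul, C_eq_natCast, map_ofNat]
      push_cast
      ring
  | succ m ih =>
      have h1 : derivative^[m+3] ((X^2-1) * g)
          = derivative^[m+2] (derivative ((X^2-1) * g)) := by
        rw [Function.iterate_succ_apply]
      have hd : derivative ((X^2 - 1) * g) = (X^2-1) * derivative g + (2:R[X]) * (X * g) := by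
        simp [derivative_mul, map_ofNat]
        ring
      rw [h1, hd, iter_deriv_add, ih (derivative g)]
      have h2 : ∀ j : ℕ, derivative^[j] (derivative g) = derivative^[j+1] g := by
        intro j; rw [← Function.iterate_succ_apply]
      rw [h2, h2, h2]
      have h3 : derivative^[m+2] ((2:R[X]) * (X * g))
          = (2:R[X]) * derivative^[m+2] (X * g) := by
        have h4 : ((2:R[X])) = C (2:R) := by rw [map_ofNat]
        rw [h4, iterate_derivative_C_mul]
      rw [h3, iter_deriv_X_mul]
      simp only [C_eq_natCast]
      push_cast
      ring

/-- The ODE satisfied by `D = ∂^[ν+1] (X²-1)^(ν+2)`. -/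
lemma ode_D (ν : ℕ) :
    (X^2 - 1 : ℂ[X]) * derivative^[ν+3] ((X^2-1)^(ν+2)) =
      C (((ν+2)*(ν+3) : ℕ) : ℂ) * derivative^[ν+1] ((X^2-1)^(ν+2)) := by
  set F : ℂ[X] := (X^2-1)^(ν+2) with hF
  have hdF : derivative F = ((ν+2 : ℕ) : ℂ[X]) * (X^2-1)^(ν+1) * ((2:ℂ[X]) * X) := by
    rw [hF, derivative_pow]
    simp only [derivative_sub, derivative_one, derivative_X_pow, sub_zero,
      Nat.add_sub_cancel, C_eq_natCast]
    norm_num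
  have hE : (X^2 - 1 : ℂ[X]) * derivative F = C ((2*(ν+2) : ℕ) : ℂ) * (X * F) := by
    rw [hdF, hF, C_eq_natCast]
    push_cast
    ring
  have happ := congrArg (fun p => derivative^[ν+2] p) hE
  have hL : derivative^[ν+2] ((X^2 - 1 : ℂ[X]) * derivative F)
      = (X^2-1) * derivative^[ν+3] F + C ((2*(ν+2) : ℕ) : ℂ) * (X * derivative^[ν+2] F)
        + C (((ν+2)*(ν+1) : ℕ) : ℂ) * derivative^[ν+1] F := by
    rw [iter_deriv_sq_mul]
    have h2 : ∀ j : ℕ, derivative^[j] (derivative F) = derivative^[j+1] F := by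
      intro j; rw [← Function.iterate_succ_apply]
    rw [h2, h2, h2]
  have hR : derivative^[ν+2] (C ((2*(ν+2) : ℕ) : ℂ) * (X * F))
      = C ((2*(ν+2) : ℕ) : ℂ) * (X * derivative^[ν+2] F
          + C ((ν+2 : ℕ) : ℂ) * derivative^[ν+1] F) := by
    rw [iterate_derivative_C_mul, iter_deriv_X_mul]
  rw [hL, hR] at happ
  simp only [C_eq_natCast] at happ ⊢
  push_cast at happ ⊢
  linear_combination happ

lemma catalan_ratio (k : ℕ) : (k+2) * catalan (k+1) = 2*(2*k+1) * catalan k := by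
  have h1 : (k+1+1) * catalan (k+1) = Nat.centralBinom (k+1) :=
    succ_mul_catalan_eq_centralBinom (k+1)
  have h3 : (k+1) * Nat.centralBinom (k+1) = 2*(2*k+1) * Nat.centralBinom k :=
    Nat.succ_mul_centralBinom_succ k
  have h4 : (k+1) * catalan k = Nat.centralBinom k :=
    succ_mul_catalan_eq_centralBinom k
  apply Nat.eq_of_mul_eq_mul_left (show 0 < k+1 by omega)
  calc (k+1) * ((k+2) * catalan (k+1)) = (k+1) * Nat.centralBinom (k+1) := by rw [← h1]
    _ = 2*(2*k+1) * Nat.centralBinom k := h3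
    _ = 2*(2*k+1) * ((k+1) * catalan k) := by rw [h4]
    _ = (k+1) * (2*(2*k+1) * catalan k) := by ring

lemma key_ratio (n k : ℕ) :
    (k+1)*(k+2) * catalan (k+1) * n.choose (2*k+2)
      = (n-2*k)*(n-2*k-1) * (catalan k * n.choose (2*k)) := by
  have e1 := Nat.choose_succ_right_eq n (2*k)
  have e2 := Nat.choose_succ_right_eq n (2*k+1)
  have e3 := catalan_ratio k
  have hsub : n - (2*k+1) = n - 2*k - 1 := by omega
  rw [hsub] at e2
  apply Nat.eq_of_mul_eq_mul_left (show 0 < (2*k+1)*(2*k+2) by positivity)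
  set s := n - 2*k with hs
  set t := n - 2*k - 1 with ht
  zify at e1 e2 e3 ⊢
  linear_combination ((2*k+1)*(k+1)*(k+2)*(catalan (k+1)):ℤ) * e2
    + ((t:ℤ)*(2*k+1)*(k+1)*(n.choose (2*k+1))) * e3
    + (2*(2*k+1)*(k+1)*(t:ℤ)*(catalan k)) * e1

lemma a_step (n k : ℕ) (hk : k ≤ n/2) :
    (catalan (k+1) * n.choose (2*(k+1)) * 4^(n/2-(k+1))) * (4*(k+1)*(k+2))
      = (catalan k * n.choose (2*k) * 4^(n/2-k)) * ((n-2*k)*(n-2*k-1)) := by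
  rcases eq_or_lt_of_le hk with he | hlt
  · -- k = n/2 : both sides vanish
    have h1 : n.choose (2*(k+1)) = 0 := by
      apply Nat.choose_eq_zero_of_lt
      omega
    have h2 : n - 2*k - 1 = 0 := by omega
    rw [h1, h2]
    ring
  · have h3 : n/2 - (k+1) = n/2 - k - 1 := by omega
    have h4 : n/2 - k = (n/2 - k - 1) + 1 := by omega
    rw [h3, h4, pow_succ]
    have key := key_ratio n k
    have h5 : 2*(k+1) = 2*k+2 := by ring
    rw [h5]
    calc (catalan (k+1) * n.choose (2*k+2) * 4^(n/2-k-1)) * (4*(k+1)*(k+2))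
        = (4^(n/2-k-1)*4) * ((k+1)*(k+2) * catalan (k+1) * n.choose (2*k+2)) := by ring
      _ = (4^(n/2-k-1)*4) * ((n-2*k)*(n-2*k-1) * (catalan k * n.choose (2*k))) := by rw [key]
      _ = (catalan k * n.choose (2*k) * (4^(n/2-k-1)*4)) * ((n-2*k)*(n-2*k-1)) := by ring

lemma A_dd (k p : ℕ) :
    (X^2 - 1 : ℂ[X]) * derivative (derivative ((X^2-1)^(k+1) * X^p)) =
      C ((2*(k+1)*(2*p+1) : ℕ) : ℂ) * ((X^2-1)^(k+1) * X^p)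
      + C ((4*k*(k+1) : ℕ) : ℂ) * ((X^2-1)^k * X^(p+2))
      + C ((p*(p-1) : ℕ) : ℂ) * ((X^2-1)^(k+2) * X^(p-2)) := by
  rcases k with _ | j <;> rcases p with _ | _ | r <;>
    simp [derivative_mul, derivative_pow_succ, derivative_X_pow, derivative_sub,
      derivative_one, derivative_X, C_eq_natCast, map_ofNat] <;>
    push_cast <;>
    ring

lemma ode_unique (N : ℕ) (y : ℂ[X]) (hdeg : y.natDegree ≤ N+2)
    (hode : (X^2-1 : ℂ[X]) * derivative (derivative y) = C (((N+1)*(N+2) : ℕ) : ℂ) * y)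
    (htop : y.coeff (N+2) = 0) : y = 0 := by
  have hode' : (X^2 : ℂ[X]) * derivative (derivative y) - derivative (derivative y)
      = C (((N+1)*(N+2) : ℕ) : ℂ) * y := by
    rw [← hode]; ring
  have hw : ∀ t : ℕ, (derivative (derivative y)).coeff t
      = y.coeff (t+2) * ((t:ℂ)+2) * ((t:ℂ)+1) := by
    intro t
    rw [coeff_derivative, coeff_derivative]
    push_cast
    ring
  have hA : ∀ i : ℕ, ((i:ℂ)*((i:ℂ)-1) - (((N+1)*(N+2) : ℕ) : ℂ)) * y.coeff i
      = ((i:ℂ)+1)*((i:ℂ)+2) * y.coeff (i+2) := by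
    intro i
    have h := congrArg (fun q : ℂ[X] => q.coeff i) hode'
    simp only [coeff_sub, coeff_C_mul] at h
    rcases i with _ | _ | j
    · have h0 : ((X^2 : ℂ[X]) * derivative (derivative y)).coeff 0 = 0 := by
        rw [mul_comm, coeff_mul_X_pow']
        norm_num
      rw [h0, hw 0] at h
      push_cast
      push_cast at h
      linear_combination h
    · have h1 : ((X^2 : ℂ[X]) * derivative (derivative y)).coeff 1 = 0 := by
        rw [mul_comm, coeff_mul_X_pow']
        norm_num
      rw [h1, hw 1] at h
      push_cast
      push_cast at h
      linear_combination h
    · have h2 : ((X^2 : ℂ[X]) * derivative (derivative y)).coeff (j+2)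
          = (derivative (derivative y)).coeff j := by
        rw [mul_comm]
        exact coeff_mul_X_pow _ 2 j
      rw [h2, hw j, hw (j+2)] at h
      push_cast
      push_cast at h
      linear_combination h
  have key : ∀ d, d ≤ N+3 → y.coeff (N+3-d) = 0 := by
    intro d
    induction d using Nat.strong_induction_on with
    | _ d ih =>
      intro hd
      match d, hd with
      | 0, _ => exact coeff_eq_zero_of_natDegree_lt (by omega)
      | 1, _ =>
        have : N+3-1 = N+2 := by omega
        rw [this]; exact htop
      | (e+2), hd =>
        set i := N+3-(e+2) with hi
        have hile : i ≤ N+1 := by omega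
        have hprev : y.coeff (i+2) = 0 := by
          have h3 : i + 2 = N+3-e := by omega
          rw [h3]
          exact ih e (by omega) (by omega)
        have hfac : ((i:ℂ)*((i:ℂ)-1) - (((N+1)*(N+2) : ℕ) : ℂ)) ≠ 0 := by
          have hlt : i*(i-1) < (N+1)*(N+2) := by
            rcases Nat.eq_zero_or_pos i with h0 | hpos
            · rw [h0]; positivity
            · calc i*(i-1) ≤ (N+1)*(i-1) := Nat.mul_le_mul_right _ (by omega)
                _ ≤ (N+1)*N := Nat.mul_le_mul_left _ (by omega)
                _ < (N+1)*(N+2) :=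
                    Nat.mul_lt_mul_of_pos_left (by omega) (by omega)
          have hcast : (i:ℂ)*((i:ℂ)-1) = ((i*(i-1) : ℕ) : ℂ) := by
            rcases Nat.eq_zero_or_pos i with h0 | hpos
            · rw [h0]; norm_num
            · have : i - 1 + 1 = i := by omega
              push_cast [Nat.cast_sub hpos]
              ring
          rw [hcast]
          intro hcontra
          rw [sub_eq_zero] at hcontra
          have := (Nat.cast_inj (R := ℂ)).mp hcontra
          omega
        have := hA i
        rw [hprev, mul_zero] at this
        exact (mul_eq_zero.mp this).resolve_left hfac
  ext i
  rw [coeff_zero]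
  rcases le_or_gt i (N+3) with hle | hgt
  · have h4 : i = N+3-(N+3-i) := by omega
    rw [h4]
    exact key (N+3-i) (by omega)
  · exact coeff_eq_zero_of_natDegree_lt (by omega)

/-- The target set: real numbers in `[-1,1]`. -/
def Sp (w : ℂ) : Prop := w.im = 0 ∧ -1 ≤ w.re ∧ w.re ≤ 1

lemma log_deriv_eval (s : Multiset ℂ) (w : ℂ) (hw : ∀ r ∈ s, w ≠ r) :
    eval w (derivative (s.map (fun r => X - C r)).prod)
      = eval w ((s.map (fun r => X - C r)).prod) * (s.map (fun r => (w - r)⁻¹)).sum := by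
  induction s using Multiset.induction_on with
  | empty => simp
  | cons a s ih =>
      have hwa : w - a ≠ 0 := sub_ne_zero.mpr (hw a (Multiset.mem_cons_self a s))
      have hw' : ∀ r ∈ s, w ≠ r := fun r hr => hw r (Multiset.mem_cons_of_mem hr)
      simp only [Multiset.map_cons, Multiset.prod_cons, Multiset.sum_cons, derivative_mul,
        eval_add, eval_mul, eval_sub, eval_X, eval_C, derivative_sub, derivative_X,
        derivative_C, sub_zero, one_mul]
      rw [ih hw']
      field_simp

lemma msum_nonneg (t : Multiset ℝ) (h : ∀ x ∈ t, 0 ≤ x) : 0 ≤ t.sum := by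
  induction t using Multiset.induction_on with
  | empty => simp
  | cons a s ih =>
      rw [Multiset.sum_cons]
      have ha := h a (Multiset.mem_cons_self a s)
      have hs := ih (fun x hx => h x (Multiset.mem_cons_of_mem hx))
      linarith

lemma msum_pos (t : Multiset ℝ) (h : ∀ x ∈ t, 0 < x) (h0 : t ≠ 0) : 0 < t.sum := by
  obtain ⟨a, ha⟩ := Multiset.exists_mem_of_ne_zero h0
  have hc := Multiset.cons_erase ha
  rw [← hc, Multiset.sum_cons]
  have h1 := h a ha
  have h2 : 0 ≤ (t.erase a).sum :=
    msum_nonneg _ (fun x hx => (h x (Multiset.mem_of_mem_erase hx)).le)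
  linarith

lemma roots_S_derivative (p : ℂ[X]) (hp : p ≠ 0) (hd : derivative p ≠ 0)
    (h : ∀ w, p.IsRoot w → Sp w) : ∀ w, (derivative p).IsRoot w → Sp w := by
  intro w hw
  by_cases hpw : p.IsRoot w
  · exact h w hpw
  have hsplit : Multiset.card p.roots = p.natDegree :=
    (splits_iff_card_roots).mp (IsAlgClosed.splits p)
  have hfact := C_leadingCoeff_mul_prod_multiset_X_sub_C hsplit
  have hdeg : p.natDegree ≠ 0 := by
    intro h0
    apply hd
    rw [eq_C_of_natDegree_eq_zero h0, derivative_C]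
  have hwne : ∀ r ∈ p.roots, w ≠ r := by
    intro r hr he
    exact hpw (he ▸ isRoot_of_mem_roots hr)
  have hde : eval w (derivative p) = 0 := hw
  have hQ : eval w ((p.roots.map (fun r => X - C r)).prod) ≠ 0 := by
    intro h0
    apply hpw
    show eval w p = 0
    rw [← hfact]
    simp [h0]
  have hsum : (p.roots.map (fun r => (w - r)⁻¹)).sum = 0 := by
    have h1 : derivative p
        = C p.leadingCoeff * derivative ((p.roots.map (fun r => X - C r)).prod) := by
      conv_lhs => rw [← hfact]
      rw [derivative_C_mul]
    rw [h1] at hde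
    simp only [eval_mul, eval_C] at hde
    have hlc : p.leadingCoeff ≠ 0 := leadingCoeff_ne_zero.mpr hp
    have h2 : eval w (derivative ((p.roots.map (fun r => X - C r)).prod)) = 0 :=
      (mul_eq_zero.mp hde).resolve_left hlc
    rw [log_deriv_eval _ _ hwne] at h2
    exact (mul_eq_zero.mp h2).resolve_left hQ
  have hroots0 : p.roots ≠ 0 := by
    intro h0
    rw [h0] at hsplit
    simp at hsplit
    exact hdeg hsplit.symm
  have hrS : ∀ r ∈ p.roots, r.im = 0 ∧ -1 ≤ r.re ∧ r.re ≤ 1 :=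
    fun r hr => h r (isRoot_of_mem_roots hr)
  have hns : ∀ r ∈ p.roots, Complex.normSq (w - r) > 0 :=
    fun r hr => Complex.normSq_pos.mpr (sub_ne_zero.mpr (hwne r hr))
  have key : ∀ (φ : ℂ →+ ℝ), (∀ r ∈ p.roots, 0 < φ ((w - r)⁻¹)) → False := by
    intro φ hφ
    have h0 : (p.roots.map (fun r => φ ((w - r)⁻¹))).sum = 0 := by
      have hh := map_multiset_sum φ (p.roots.map (fun r => (w - r)⁻¹))
      rw [hsum, Multiset.map_map] at hh
      simpa using hh.symm
    have hgt : 0 < (p.roots.map (fun r => φ ((w - r)⁻¹))).sum := by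
      apply msum_pos
      · intro x hx
        obtain ⟨r, hr, rfl⟩ := Multiset.mem_map.mp hx
        exact hφ r hr
      · simpa using hroots0
    linarith
  by_contra hcon
  rw [Sp] at hcon
  push_neg at hcon
  by_cases him : w.im = 0
  · rcases le_or_gt (-1 : ℝ) w.re with h1 | h1
    · have h2 : 1 < w.re := hcon him h1
      apply key Complex.reAddGroupHom
      intro r hr
      have h3 := (hrS r hr).2.2
      have h4 : ((w - r)⁻¹).re = (w - r).re / Complex.normSq (w - r) := Complex.inv_re _
      have h5 : (w - r).re = w.re - r.re := Complex.sub_re _ _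
      show 0 < ((w - r)⁻¹).re
      rw [h4, h5]
      apply div_pos (by linarith) (hns r hr)
    · apply key (-Complex.reAddGroupHom)
      intro r hr
      have h3 := (hrS r hr).2.1
      have h4 : ((w - r)⁻¹).re = (w - r).re / Complex.normSq (w - r) := Complex.inv_re _
      have h5 : (w - r).re = w.re - r.re := Complex.sub_re _ _
      show 0 < -((w - r)⁻¹).re
      rw [h4, h5]
      have h6 : w.re - r.re < 0 := by linarith
      have h7 := hns r hr
      have : (w.re - r.re) / Complex.normSq (w - r) < 0 := div_neg_of_neg_of_pos h6 h7
      linarith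
  · rcases lt_or_gt_of_ne him with hneg | hpos
    · apply key Complex.imAddGroupHom
      intro r hr
      have h4 : ((w - r)⁻¹).im = -(w - r).im / Complex.normSq (w - r) := Complex.inv_im _
      have h5 : (w - r).im = w.im - r.im := Complex.sub_im _ _
      show 0 < ((w - r)⁻¹).im
      rw [h4, h5, (hrS r hr).1, sub_zero]
      apply div_pos (by linarith) (hns r hr)
    · apply key (-Complex.imAddGroupHom)
      intro r hr
      have h4 : ((w - r)⁻¹).im = -(w - r).im / Complex.normSq (w - r) := Complex.inv_im _
      have h5 : (w - r).im = w.im - r.im := Complex.sub_im _ _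
      show 0 < -((w - r)⁻¹).im
      rw [h4, h5, (hrS r hr).1, sub_zero]
      have h7 := hns r hr
      have : -w.im / Complex.normSq (w - r) < 0 :=
        div_neg_of_neg_of_pos (by linarith) h7
      linarith

lemma monic_base : ((X:ℂ[X])^2 - 1).Monic := by
  have h := monic_X_pow_sub_C (1:ℂ) (n := 2) (by norm_num)
  simpa using h

lemma base_natDegree : ((X:ℂ[X])^2 - 1).natDegree = 2 := by
  have h : ((X:ℂ[X])^2 - C 1).natDegree = 2 := natDegree_X_pow_sub_C
  simpa using h

lemma f_natDegree (n : ℕ) : (((X:ℂ[X])^2-1)^(n+1)).natDegree = 2*n+2 := by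
  rw [natDegree_pow, base_natDegree]
  ring

lemma D_coeff_ne (n : ℕ) : ∀ j, j ≤ n+1 →
    (derivative^[j] (((X:ℂ[X])^2-1)^(n+1))).coeff (2*n+2-j) ≠ 0 := by
  intro j
  induction j with
  | zero =>
      intro _
      simp only [Function.iterate_zero_apply, Nat.sub_zero]
      have h1 : (2*n+2) = (((X:ℂ[X])^2-1)^(n+1)).natDegree := (f_natDegree n).symm
      rw [h1, coeff_natDegree, (monic_base.pow (n+1)).leadingCoeff]
      exact one_ne_zero
  | succ j ih =>
      intro hj
      rw [Function.iterate_succ_apply', coeff_derivative]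
      have he : 2*n+2-(j+1)+1 = 2*n+2-j := by omega
      rw [he]
      exact mul_ne_zero (ih (by omega)) (Nat.cast_add_one_ne_zero _)

def a (n k : ℕ) : ℕ := catalan k * n.choose (2*k) * 4^(n/2-k)

noncomputable def F (n k : ℕ) : ℂ[X] := (X^2-1)^(k+1) * X^(n-2*k)

noncomputable def Pn (n : ℕ) : ℂ[X] := ∑ k ∈ range (n/2+1), C (a n k : ℂ) * F n k

lemma a_step' (n k : ℕ) (hk : k ≤ n/2) :
    a n (k+1) * (4*(k+1)*(k+2)) = a n k * ((n-2*k)*(n-2*k-1)) := a_step n k hk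

lemma a_top (n : ℕ) : a n (n/2+1) = 0 := by
  have h : n.choose (2*(n/2+1)) = 0 := Nat.choose_eq_zero_of_lt (by omega)
  rw [a, h]
  ring

lemma ode_P (n : ℕ) :
    (X^2-1 : ℂ[X]) * derivative (derivative (Pn n)) = C (((n+1)*(n+2) : ℕ) : ℂ) * Pn n := by
  have expand : (X^2-1 : ℂ[X]) * derivative (derivative (Pn n))
      = ∑ k ∈ range (n/2+1), C (a n k : ℂ) * ((X^2-1) * derivative (derivative (F n k))) := by
    rw [Pn]
    simp only [derivative_sum, derivative_C_mul, Finset.mul_sum]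
    exact Finset.sum_congr rfl (fun k _ => by ring)
  have expand2 : ∀ k ∈ range (n/2+1),
      C (a n k : ℂ) * ((X^2-1 : ℂ[X]) * derivative (derivative (F n k)))
      = C ((a n k * (2*(k+1)*(2*(n-2*k)+1)) : ℕ) : ℂ) * F n k
        + C ((a n k * (4*k*(k+1)) : ℕ) : ℂ) * ((X^2-1)^k * X^(n-2*k+2))
        + C ((a n k * ((n-2*k)*(n-2*k-1)) : ℕ) : ℂ) * F n (k+1) := by
    intro k _
    have hexp : n - 2*(k+1) = n - 2*k - 2 := by omega
    rw [F, F, hexp, A_dd k (n-2*k)]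
    simp only [C_eq_natCast]
    push_cast
    ring
  have hS2 : ∑ k ∈ range (n/2+1),
        C ((a n k * (4*k*(k+1)) : ℕ) : ℂ) * ((X^2-1 : ℂ[X])^k * X^(n-2*k+2))
      = ∑ k ∈ range (n/2+1), C ((a n (k+1) * (4*(k+1)*(k+2)) : ℕ) : ℂ) * F n k := by
    rw [Finset.sum_range_succ'
      (fun k => C ((a n k * (4*k*(k+1)) : ℕ) : ℂ) * ((X^2-1 : ℂ[X])^k * X^(n-2*k+2)))]
    rw [Finset.sum_range_succ
      (fun k => C ((a n (k+1) * (4*(k+1)*(k+2)) : ℕ) : ℂ) * F n k)]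
    have h0 : C ((a n 0 * (4*0*(0+1)) : ℕ) : ℂ) * ((X^2-1 : ℂ[X])^0 * X^(n-2*0+2)) = 0 := by
      norm_num
    have hm1 : C ((a n (n/2+1) * (4*(n/2+1)*(n/2+2)) : ℕ) : ℂ) * F n (n/2) = 0 := by
      rw [a_top]
      norm_num
    rw [h0, hm1, add_zero, add_zero]
    apply Finset.sum_congr rfl
    intro i hi
    have hi' : i < n/2 := Finset.mem_range.mp hi
    have hexp : n - 2*(i+1) + 2 = n - 2*i := by omega
    rw [F, hexp]
  have hS3 : ∑ k ∈ range (n/2+1),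
        C ((a n k * ((n-2*k)*(n-2*k-1)) : ℕ) : ℂ) * F n (k+1)
      = ∑ k ∈ range (n/2+1), C ((a n k * (4*k*(k+1)) : ℕ) : ℂ) * F n k := by
    rw [Finset.sum_range_succ
      (fun k => C ((a n k * ((n-2*k)*(n-2*k-1)) : ℕ) : ℂ) * F n (k+1))]
    rw [Finset.sum_range_succ'
      (fun k => C ((a n k * (4*k*(k+1)) : ℕ) : ℂ) * F n k)]
    have hz1 : C ((a n (n/2) * ((n-2*(n/2))*(n-2*(n/2)-1)) : ℕ) : ℂ) * F n (n/2+1) = 0 := by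
      have h : n-2*(n/2)-1 = 0 := by omega
      rw [h]
      norm_num
    have hz2 : C ((a n 0 * (4*0*(0+1)) : ℕ) : ℂ) * F n 0 = 0 := by norm_num
    rw [hz1, hz2, add_zero, add_zero]
    apply Finset.sum_congr rfl
    intro i hi
    have hi' : i < n/2 := Finset.mem_range.mp hi
    rw [← a_step' n i hi'.le]
  calc (X^2-1 : ℂ[X]) * derivative (derivative (Pn n))
      = ∑ k ∈ range (n/2+1), C (a n k : ℂ) * ((X^2-1) * derivative (derivative (F n k))) :=
        expand
    _ = ∑ k ∈ range (n/2+1),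
          (C ((a n k * (2*(k+1)*(2*(n-2*k)+1)) : ℕ) : ℂ) * F n k
            + C ((a n k * (4*k*(k+1)) : ℕ) : ℂ) * ((X^2-1)^k * X^(n-2*k+2))
            + C ((a n k * ((n-2*k)*(n-2*k-1)) : ℕ) : ℂ) * F n (k+1)) :=
        Finset.sum_congr rfl expand2
    _ = (∑ k ∈ range (n/2+1), C ((a n k * (2*(k+1)*(2*(n-2*k)+1)) : ℕ) : ℂ) * F n k)
        + (∑ k ∈ range (n/2+1),
            C ((a n k * (4*k*(k+1)) : ℕ) : ℂ) * ((X^2-1)^k * X^(n-2*k+2)))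
        + (∑ k ∈ range (n/2+1),
            C ((a n k * ((n-2*k)*(n-2*k-1)) : ℕ) : ℂ) * F n (k+1)) := by
        rw [Finset.sum_add_distrib, Finset.sum_add_distrib]
    _ = ∑ k ∈ range (n/2+1),
          (C ((a n k * (2*(k+1)*(2*(n-2*k)+1)) : ℕ) : ℂ) * F n k
            + C ((a n (k+1) * (4*(k+1)*(k+2)) : ℕ) : ℂ) * F n k
            + C ((a n k * (4*k*(k+1)) : ℕ) : ℂ) * F n k) := by
        rw [hS2, hS3, ← Finset.sum_add_distrib, ← Finset.sum_add_distrib]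
    _ = ∑ k ∈ range (n/2+1), C (((n+1)*(n+2) * a n k : ℕ) : ℂ) * F n k := by
        apply Finset.sum_congr rfl
        intro k hk
        have hk' : k ≤ n/2 := by
          have := Finset.mem_range.mp hk; omega
        have hnat : a n k * (2*(k+1)*(2*(n-2*k)+1)) + a n (k+1) * (4*(k+1)*(k+2))
            + a n k * (4*k*(k+1)) = (n+1)*(n+2) * a n k := by
          rw [a_step' n k hk']
          obtain ⟨p, rfl⟩ : ∃ p, n = 2*k+p := ⟨n-2*k, by omega⟩
          have hp : 2*k+p - 2*k = p := by omega
          rw [hp]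
          rcases p with _ | r
          · ring_nf
          · have : r+1-1 = r := by omega
            rw [this]
            ring
        rw [← hnat]
        simp only [C_eq_natCast]
        push_cast
        ring
    _ = C (((n+1)*(n+2) : ℕ) : ℂ) * Pn n := by
        rw [Pn, Finset.mul_sum]
        apply Finset.sum_congr rfl
        intro k _
        simp only [C_eq_natCast]
        push_cast
        ring

-- new material
lemma f_roots (n : ℕ) : ∀ w, (((X:ℂ[X])^2-1)^(n+1)).IsRoot w → Sp w := by
  intro w hw
  have h1 : (w^2-1)^(n+1) = 0 := by simpa [IsRoot] using hw
  have h2 : w^2 - 1 = 0 := pow_eq_zero_iff (by omega) |>.mp h1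
  have h3 : (w-1)*(w+1) = 0 := by linear_combination h2
  rcases mul_eq_zero.mp h3 with h | h
  · have hw1 : w = 1 := by linear_combination h
    rw [hw1]
    refine ⟨by simp, by norm_num, by norm_num⟩
  · have hw1 : w = -1 := by linear_combination h
    rw [hw1]
    refine ⟨by simp, by norm_num, by norm_num⟩

lemma D_roots (n : ℕ) :
    ∀ w, (derivative^[n] (((X:ℂ[X])^2-1)^(n+1))).IsRoot w → Sp w := by
  have main : ∀ j, j ≤ n → ∀ w, (derivative^[j] (((X:ℂ[X])^2-1)^(n+1))).IsRoot w → Sp w := by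
    intro j
    induction j with
    | zero =>
        intro _
        simpa using f_roots n
    | succ j ih =>
        intro hj w hw
        have hp : derivative^[j] (((X:ℂ[X])^2-1)^(n+1)) ≠ 0 := by
          intro h0
          exact D_coeff_ne n j (by omega) (by rw [h0]; simp)
        have hd : derivative (derivative^[j] (((X:ℂ[X])^2-1)^(n+1))) ≠ 0 := by
          intro h0
          apply D_coeff_ne n (j+1) (by omega)
          rw [Function.iterate_succ_apply', h0]
          simp
        apply roots_S_derivative _ hp hd (ih (by omega))
        rw [Function.iterate_succ_apply'] at hw
        exact hw
  exact main n le_rfl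

lemma F_monic (n k : ℕ) : (F n k).Monic := (monic_base.pow (k+1)).mul (monic_X_pow _)

lemma F_natDegree (n k : ℕ) (hk : k ≤ n/2) : (F n k).natDegree = n+2 := by
  rw [F, (monic_base.pow (k+1)).natDegree_mul (monic_X_pow _), natDegree_pow,
    base_natDegree, natDegree_X_pow]
  omega

lemma F_coeff_top (n k : ℕ) (hk : k ≤ n/2) : (F n k).coeff (n+2) = 1 := by
  rw [← F_natDegree n k hk, coeff_natDegree, (F_monic n k).leadingCoeff]

lemma Pn_coeff_top (n : ℕ) :
    (Pn n).coeff (n+2) = ((∑ k ∈ range (n/2+1), a n k : ℕ) : ℂ) := by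
  rw [Pn, finset_sum_coeff]
  push_cast
  apply Finset.sum_congr rfl
  intro k hk
  rw [coeff_C_mul, F_coeff_top n k (by have := mem_range.mp hk; omega)]
  try rw [mul_one]

lemma Pn_deg (n : ℕ) : (Pn n).natDegree ≤ n+2 := by
  rw [Pn]
  apply natDegree_sum_le_of_forall_le
  intro k hk
  refine (natDegree_C_mul_le _ _).trans ?_
  rw [F]
  refine (natDegree_mul_le).trans ?_
  rw [natDegree_pow, base_natDegree, natDegree_X_pow]
  have := mem_range.mp hk
  omega

lemma N_pos (n : ℕ) : 0 < ∑ k ∈ range (n/2+1), a n k := by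
  have h0 : 0 < a n 0 := by
    rw [a]
    simp [catalan_zero]
    try positivity
  calc 0 < a n 0 := h0
    _ ≤ ∑ k ∈ range (n/2+1), a n k :=
        Finset.single_le_sum (f := a n) (fun i _ => Nat.zero_le _) (mem_range.mpr (by omega))

lemma D_eq_P (n : ℕ) (hn : n ≠ 0) :
    C ((∑ k ∈ range (n/2+1), a n k : ℕ) : ℂ) * derivative^[n] (((X:ℂ[X])^2-1)^(n+1))
      = C ((derivative^[n] (((X:ℂ[X])^2-1)^(n+1))).coeff (n+2)) * Pn n := by
  obtain ⟨ν, rfl⟩ : ∃ ν, n = ν+1 := ⟨n-1, by omega⟩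
  set n := ν+1 with hnn
  set D : ℂ[X] := derivative^[n] (((X:ℂ[X])^2-1)^(n+1)) with hD
  set Nc : ℂ := ((∑ k ∈ range (n/2+1), a n k : ℕ) : ℂ) with hNc
  set y : ℂ[X] := C Nc * D - C (D.coeff (n+2)) * Pn n with hy
  have hodeD : (X^2-1:ℂ[X]) * (derivative (derivative D)) = C (((n+1)*(n+2):ℕ):ℂ) * D := by
    have hD2 : derivative^[n+2] (((X:ℂ[X])^2-1)^(n+1)) = derivative (derivative D) := by
      rw [Function.iterate_succ_apply', Function.iterate_succ_apply', hD]
    rw [← hD2, hD]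
    exact ode_D ν
  have hodeP := ode_P n
  have hode : (X^2-1 : ℂ[X]) * derivative (derivative y) = C (((n+1)*(n+2) : ℕ):ℂ) * y := by
    rw [hy, derivative_sub, derivative_C_mul, derivative_C_mul, derivative_sub,
      derivative_C_mul, derivative_C_mul]
    linear_combination (C Nc) * hodeD - (C (D.coeff (n+2))) * hodeP
  have hdeg : y.natDegree ≤ n+2 := by
    apply le_trans (natDegree_sub_le _ _)
    apply max_le
    · exact (natDegree_C_mul_le _ _).trans
        ((natDegree_iterate_derivative _ _).trans (by rw [f_natDegree]; omega))
    · exact (natDegree_C_mul_le _ _).trans (Pn_deg n)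
  have htop : y.coeff (n+2) = 0 := by
    rw [hy, coeff_sub, coeff_C_mul, coeff_C_mul, Pn_coeff_top]
    ring
  have hzero := ode_unique n y hdeg hode htop
  rw [hy] at hzero
  exact sub_eq_zero.mp hzero

end QnAux

/-- Every complex root of `q_n(x) = ∑_{k=0}^{⌊n/2⌋} C_k·binom(n,2k)·x^k` lies on the
negative real axis (`C_k` the Catalan numbers; for `n ≤ 1`, `q_n` is constant and
the claim is vacuous). -/
theorem qn_roots_real_negative (n : ℕ) (z : ℂ)
    (hz : (∑ k ∈ Finset.range (n / 2 + 1),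
        Polynomial.C ((catalan k : ℂ) * (n.choose (2 * k) : ℂ)) *
          Polynomial.X ^ k).eval z = 0) :
    ∃ r : ℝ, r < 0 ∧ z = (r : ℂ) := by
  rw [eval_finset_sum] at hz
  simp only [eval_mul, eval_C, eval_pow, eval_X] at hz
  by_cases hn0 : n = 0
  · subst hn0
    rw [Finset.sum_range_succ] at hz
    simp at hz
  have hz0 : z ≠ 0 := by
    rintro rfl
    rw [Finset.sum_range_succ'] at hz
    simp at hz
  have h14 : (1 : ℂ) - 4*z ≠ 0 := by
    intro hc
    have hz4 : z = 4⁻¹ := by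
      rw [inv_eq_one_div, eq_div_iff (by norm_num : (4:ℂ) ≠ 0)]
      linear_combination -hc
    subst hz4
    have hsum : (4:ℂ)^(n/2) * ∑ k ∈ range (n/2+1),
          (catalan k:ℂ) * (n.choose (2*k):ℂ) * ((4:ℂ)⁻¹)^k
        = ((∑ k ∈ range (n/2+1), QnAux.a n k : ℕ) : ℂ) := by
      rw [Finset.mul_sum]
      push_cast [QnAux.a]
      apply Finset.sum_congr rfl
      intro k hk
      have hk' : k ≤ n/2 := by have := mem_range.mp hk; omega
      have h4' : (4:ℂ)^(n/2-k) = (4:ℂ)^(n/2) * ((4:ℂ)^k)⁻¹ := by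
        rw [eq_mul_inv_iff_mul_eq₀ (pow_ne_zero _ (by norm_num : (4:ℂ) ≠ 0)), ← pow_add]
        congr 1
        omega
      rw [h4', inv_pow]
      ring
    rw [hz, mul_zero] at hsum
    exact absurd (Nat.cast_eq_zero.mp hsum.symm) (QnAux.N_pos n).ne'
  obtain ⟨u, hu⟩ := IsAlgClosed.exists_pow_nat_eq ((1 - 4*z)⁻¹) (n := 2) (by norm_num)
  have hu0 : u ≠ 0 := by
    intro h0
    have hinv : ((1:ℂ) - 4*z)⁻¹ = 0 := by rw [← hu, h0]; ring
    exact h14 (inv_eq_zero.mp hinv)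
  have huz : u^2 - 1 = z * (4*u^2) := by
    have h1 : u^2 * (1 - 4*z) = 1 := by rw [hu]; exact inv_mul_cancel₀ h14
    linear_combination h1
  have hPu : eval u (QnAux.Pn n) = 0 := by
    rw [QnAux.Pn, eval_finset_sum]
    have hterm : ∀ k ∈ range (n/2+1), eval u (C (QnAux.a n k : ℂ) * QnAux.F n k)
        = ((u^2-1) * 4^(n/2) * u^n) * ((catalan k : ℂ) * (n.choose (2*k) : ℂ) * z^k) := by
      intro k hk
      have hk' : k ≤ n/2 := by have := mem_range.mp hk; omega
      rw [QnAux.F]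
      simp only [eval_mul, eval_C, eval_pow, eval_X, eval_sub, eval_one]
      have e0 : (u^2-(1:ℂ))^k = z^k * (4:ℂ)^k * (u^2)^k := by
        rw [huz, mul_pow, mul_pow]
        ring
      have e1 : (u^2-(1:ℂ))^(k+1) = (u^2-1) * (z^k * (4:ℂ)^k * (u^2)^k) := by
        rw [pow_succ', e0]
      have h2k : ((u:ℂ)^2)^k * u^(n-2*k) = u^n := by
        rw [← pow_mul, ← pow_add]
        congr 1
        omega
      have h4 : (4:ℂ)^(n/2-k) * (4:ℂ)^k = (4:ℂ)^(n/2) := by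
        rw [← pow_add]
        congr 1
        omega
      rw [e1, QnAux.a]
      push_cast
      rw [← h2k, ← h4]
      ring
    rw [Finset.sum_congr rfl hterm, ← Finset.mul_sum, hz, mul_zero]
  have hident := QnAux.D_eq_P n hn0
  have hDu : (derivative^[n] (((X:ℂ[X])^2-1)^(n+1))).IsRoot u := by
    have h5 := congrArg (eval u) hident
    simp only [eval_mul, eval_C] at h5
    rw [hPu, mul_zero] at h5
    have hN : ((∑ k ∈ range (n/2+1), QnAux.a n k : ℕ) : ℂ) ≠ 0 :=
      Nat.cast_ne_zero.mpr (QnAux.N_pos n).ne'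
    exact (mul_eq_zero.mp h5).resolve_left hN
  obtain ⟨him, hre1, hre2⟩ := QnAux.D_roots n u hDu
  set r := u.re with hrdef
  have hur : u = (r : ℂ) := by
    apply Complex.ext
    · simp [hrdef]
    · simp [him]
  have hrne : r ≠ 0 := by
    intro h0
    apply hu0
    rw [hur, h0, Complex.ofReal_zero]
  have hr2 : r^2 ≤ 1 := by nlinarith
  have hden : ((4*r^2 : ℝ) : ℂ) ≠ 0 := by
    rw [Complex.ofReal_ne_zero]
    positivity
  have hznum : z * ((4*r^2 : ℝ) : ℂ) = ((r^2 - 1 : ℝ) : ℂ) := by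
    rw [hur] at huz
    push_cast at huz ⊢
    linear_combination -huz
  have hzr : z = (((r^2-1)/(4*r^2) : ℝ) : ℂ) := by
    rw [Complex.ofReal_div, eq_div_iff hden]
    exact hznum
  have hrneg : (r^2-1)/(4*r^2) < 0 := by
    have hne1 : r^2 ≠ 1 := by
      intro h1
      apply hz0
      rw [hzr, h1]
      norm_num
    have hlt : r^2 < 1 := lt_of_le_of_ne hr2 hne1
    exact div_neg_of_neg_of_pos (by linarith) (by positivity)
  exact ⟨(r^2-1)/(4*r^2), hrneg, hzr⟩
end

section
/- Let n ≥ 1 and let y ∈ ℂ \ [-1, 0]. Then there exists ξ ∈ ℂ with ξ² = y(y+1) and Re(ξ/y) > 0. -/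
open Complex

/-!
Take `ξ = y √(1 + 1/y)` with the principal square root. Its square is `y (y + 1)` and
`ξ / y = √(1 + 1/y)`. The principal root has positive real part except on `(-∞, 0]`, and
`1 + 1/y ∈ (-∞, 0]` exactly when `y ∈ [-1, 0)`.
-/

namespace Complex

theorem sqrt_sq (w : ℂ) : w.sqrt ^ 2 = w :=
  cpow_ofNat_inv_pow w 2

theorem sqrt_re_pos {w : ℂ} (hw : w ∈ slitPlane) : 0 < w.sqrt.re := by
  rw [Complex.sqrt, cpow_inv_two_re, Real.sqrt_pos]
  rcases mem_slitPlane_iff.mp hw with hre | him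
  · positivity
  · linarith [neg_abs_le w.re, abs_re_lt_norm.mpr him]

theorem one_add_inv_mem_slitPlane {y : ℂ} (hy : y ∉ ofReal '' Set.Icc (-1) 0) :
    1 + y⁻¹ ∈ slitPlane := by
  by_contra hw
  rw [mem_slitPlane_iff, not_or, not_lt, not_not] at hw
  obtain ⟨hre, him⟩ := hw
  set s := (1 + y⁻¹).re - 1
  have hs : s ≤ -1 := by linarith
  have hy_eq : y = ((s⁻¹ : ℝ) : ℂ) := by
    have hy_inv : y⁻¹ = s := by
      apply Complex.ext <;> simp_all [s]
    rw [ofReal_inv, ← hy_inv, inv_inv]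
  refine hy ⟨s⁻¹, ⟨?_, ?_⟩, hy_eq.symm⟩
  · rw [le_inv_of_neg (by norm_num) (by linarith)]
    simpa using hs
  · exact inv_nonpos.mpr (by linarith)

end Complex

/-- For `y ∈ ℂ \ [-1,0]` there is a square root `ξ` of `y(y+1)` with `Re(ξ/y) > 0`. -/
theorem exists_sqrt_re_pos (y : ℂ)
    (hy : y ∉ (fun r : ℝ => (r : ℂ)) '' Set.Icc (-1 : ℝ) 0) :
    ∃ ξ : ℂ, ξ ^ 2 = y * (y + 1) ∧ 0 < (ξ / y).re := by
  have hy0 : y ≠ 0 := by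
    rintro rfl
    exact hy ⟨0, by norm_num, by simp⟩
  refine ⟨y * (1 + y⁻¹).sqrt, ?_, ?_⟩
  · rw [mul_pow, sqrt_sq]
    field_simp
  · rw [mul_div_cancel_left₀ _ hy0]
    exact sqrt_re_pos (one_add_inv_mem_slitPlane hy)
end

section
/- Let y ∈ ℂ \ [-1, 0] and let ξ ∈ ℂ satisfy ξ² = y(y+1) and Re(ξ/y) > 0. Then Re(ξ/(y+θ)) > 0 for every θ ∈ [0, 1]. -/
open Complex

private theorem quad_contra (y : ℂ)
    (hy : y ∉ (fun r : ℝ => (r : ℂ)) '' Set.Icc (-1 : ℝ) 0)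
    (t c : ℝ) (ht : 0 ≤ t) (hc0 : 0 ≤ c) (hc1 : c ≤ 1)
    (hq : ((1+t : ℝ) : ℂ) * y^2 + ((1+2*t*c : ℝ) : ℂ) * y + ((t*c^2 : ℝ) : ℂ) = 0) :
    False := by
  set A : ℝ := 1 + t with hA
  set B : ℝ := 1 + 2*t*c with hB
  set C : ℝ := t*c^2 with hC
  have hApos : 0 < A := by positivity
  have hBpos : 0 < B := by
    simp only [hB]; nlinarith [mul_nonneg ht hc0]
  have hCnn : 0 ≤ C := by simp only [hC]; positivity
  set D : ℝ := B^2 - 4*A*C with hD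
  have hDnn : 0 ≤ D := by
    simp only [hD, hA, hB, hC]
    nlinarith [mul_nonneg (mul_nonneg ht hc0) (sub_nonneg.mpr hc1)]
  set s : ℝ := Real.sqrt D with hs
  have hs2 : s^2 = D := Real.sq_sqrt hDnn
  have hsnn : 0 ≤ s := Real.sqrt_nonneg D
  have hsB : s ≤ B := by
    have h1 : D ≤ B^2 := by nlinarith
    calc s = Real.sqrt D := hs
    _ ≤ Real.sqrt (B^2) := Real.sqrt_le_sqrt h1
    _ = B := by rw [Real.sqrt_sq hBpos.le]
  have h2ABpos : 0 < 2*A - B := by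
    simp only [hA, hB]; nlinarith [mul_nonneg ht (sub_nonneg.mpr hc1)]
  have hs2A : s ≤ 2*A - B := by
    have h1 : D ≤ (2*A - B)^2 := by
      have he : (2*A - B)^2 - D = 4*A*(A - B + C) := by simp only [hD]; ring
      have he2 : A - B + C = t*(1-c)^2 := by simp only [hA, hB, hC]; ring
      nlinarith [mul_nonneg (le_of_lt hApos) (mul_nonneg ht (sq_nonneg (1 - c)))]
    calc s = Real.sqrt D := hs
    _ ≤ Real.sqrt ((2*A - B)^2) := Real.sqrt_le_sqrt h1
    _ = 2*A - B := by rw [Real.sqrt_sq h2ABpos.le]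
  set r₁ : ℝ := (-B + s) / (2*A) with hr₁
  set r₂ : ℝ := (-B - s) / (2*A) with hr₂
  have h2A : (0:ℝ) < 2*A := by linarith
  have hsum : A * (r₁ + r₂) = -B := by
    rw [hr₁, hr₂]; field_simp; ring
  have hprod : A * (r₁ * r₂) = C := by
    have h4 : (4*A) * (A * (r₁ * r₂)) = (4*A) * C := by
      rw [hr₁, hr₂]; field_simp; nlinarith [hs2]
    exact mul_left_cancel₀ (by positivity : (4:ℝ)*A ≠ 0) h4
  have hq' : (A:ℂ) * y^2 + (B:ℂ) * y + (C:ℂ) = 0 := by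
    rw [hA, hB, hC]; exact_mod_cast hq
  have hsumC : (A:ℂ) * ((r₁:ℂ) + (r₂:ℂ)) = -(B:ℂ) := by
    exact_mod_cast congrArg (fun x : ℝ => (x:ℂ)) hsum
  have hprodC : (A:ℂ) * ((r₁:ℂ) * (r₂:ℂ)) = (C:ℂ) := by
    exact_mod_cast congrArg (fun x : ℝ => (x:ℂ)) hprod
  have hfac : (A:ℂ) * (y - (r₁:ℂ)) * (y - (r₂:ℂ)) = 0 := by
    linear_combination hq' - y * hsumC + hprodC
  have hr₁le : r₁ ≤ 0 := div_nonpos_of_nonpos_of_nonneg (by linarith) (by linarith)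
  have hr₂ge : -1 ≤ r₂ := by
    rw [hr₂, le_div_iff₀ h2A]; linarith
  have hr₁ge : -1 ≤ r₁ := by
    rw [hr₁, le_div_iff₀ h2A]; linarith
  have hr₂le : r₂ ≤ 0 := div_nonpos_of_nonpos_of_nonneg (by linarith) (by linarith)
  have hAne : ((A:ℝ):ℂ) ≠ 0 := by exact_mod_cast hApos.ne'
  rcases mul_eq_zero.mp hfac with h | h
  · rcases mul_eq_zero.mp h with h | h
    · exact hAne h
    · exact hy ⟨r₁, ⟨hr₁ge, hr₁le⟩, (sub_eq_zero.mp h).symm⟩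
  · exact hy ⟨r₂, ⟨hr₂ge, hr₂le⟩, (sub_eq_zero.mp h).symm⟩

/-- If `y ∈ ℂ \ [-1,0]` and `ξ² = y(y+1)` with `Re(ξ/y) > 0`, then
`Re(ξ/(y+θ)) > 0` for every `θ ∈ [0,1]`. -/
theorem re_div_pos_of_sqrt (y ξ : ℂ)
    (hy : y ∉ (fun r : ℝ => (r : ℂ)) '' Set.Icc (-1 : ℝ) 0)
    (hξ : ξ ^ 2 = y * (y + 1)) (hre : 0 < (ξ / y).re)
    (θ : ℝ) (hθ : θ ∈ Set.Icc (0 : ℝ) 1) :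
    0 < (ξ / (y + (θ : ℂ))).re := by
  obtain ⟨hθ0, hθ1⟩ := hθ
  have hne : ∀ c ∈ Set.Icc (0:ℝ) 1, y + (c:ℂ) ≠ 0 := by
    intro c hc h
    apply hy
    exact ⟨-c, ⟨by linarith [hc.2], by linarith [hc.1]⟩, by push_cast; linear_combination -h ⟩
  set f : ℝ → ℝ := fun c => (ξ / (y + (c:ℂ))).re with hf
  have hcont : ContinuousOn f (Set.Icc 0 1) := by
    apply Complex.continuous_re.comp_continuousOn
    exact ContinuousOn.div continuousOn_const
      ((continuous_const.add Complex.continuous_ofReal).continuousOn) hne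
  have hf0 : f 0 = (ξ / y).re := by simp [hf]
  by_contra hcon
  push_neg at hcon
  have hsub : Set.Icc (0:ℝ) θ ⊆ Set.Icc (0:ℝ) 1 := Set.Icc_subset_Icc le_rfl hθ1
  have hiv := intermediate_value_Icc' hθ0 (hcont.mono hsub)
  have h0mem : (0:ℝ) ∈ Set.Icc (f θ) (f 0) := ⟨hcon, by rw [hf0]; exact hre.le⟩
  obtain ⟨c, hcmem, hfc⟩ := hiv h0mem
  have hc0 : 0 ≤ c := hcmem.1
  have hc1 : c ≤ 1 := le_trans hcmem.2 hθ1
  have hyc : y + (c:ℂ) ≠ 0 := hne c ⟨hc0, hc1⟩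
  set w : ℂ := ξ / (y + (c:ℂ)) with hw
  have hwre : w.re = 0 := hfc
  have hξw : ξ = w * (y + (c:ℂ)) := by rw [hw, div_mul_cancel₀ _ hyc]
  obtain ⟨b, hb⟩ : ∃ b : ℝ, w = (b:ℂ) * I :=
    ⟨w.im, by apply Complex.ext <;> simp [hwre]⟩
  set t : ℝ := b^2 with htdef
  have ht : 0 ≤ t := sq_nonneg _
  have hw2 : w^2 = -((t : ℝ):ℂ) := by
    rw [hb, mul_pow, I_sq, htdef]; push_cast; ring
  have h1 : y * (y + 1) = w^2 * (y + (c:ℂ))^2 := by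
    rw [← hξ, hξw]; ring
  have hq : ((1+t : ℝ) : ℂ) * y^2 + ((1+2*t*c : ℝ) : ℂ) * y + ((t*c^2 : ℝ) : ℂ) = 0 := by
    push_cast
    linear_combination h1 + (y + (c:ℂ))^2 * hw2
  exact quad_contra y hy t c ht hc0 hc1 hq
end

section
/- Let a < b be reals, c > 0, and y ∈ ℂ \ [a, b]. Then there exists ξ ∈ ℂ with ξ² = c(y−a)(y−b) and Re(ξ/(y−a)) > 0; moreover for such ξ, Re(ξ/(y−θ)) > 0 for all θ ∈ [a, b]. -/
/-!
The condition `0 < Re (ξ / z)` says that `z` lies in the open half-plane `Re (ξ * conj z) > 0`,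
which is convex. As `θ` runs over `[a, b]`, `y - θ` runs along the segment from `y - a` to `y - b`,
so it suffices to check the endpoints, and `ξ / (y - b) = c / (ξ / (y - a))` has real part of the
same sign as `ξ / (y - a)`. For existence, `c (y - b) / (y - a)` is not a nonpositive real (else `y`
would be a weighted mean of `a` and `b`), so it has a square root `ζ` with `0 < Re ζ`, and
`ξ = ζ (y - a)` works.
-/

open Complex Set ComplexConjugate

namespace Complex

lemma exists_sq_eq_re_pos {w : ℂ} (hw : w ∈ slitPlane) : ∃ ζ : ℂ, ζ ^ 2 = w ∧ 0 < ζ.re := by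
  obtain ⟨ζ, hζ⟩ := IsAlgClosed.exists_pow_nat_eq w two_pos
  have hre : ζ.re ≠ 0 := by
    rw [ne_eq, ← sq_nonpos_iff, hζ]
    exact mem_slitPlane_iff_not_le_zero.1 hw
  rcases hre.lt_or_gt with hneg | hpos
  · exact ⟨-ζ, by rw [neg_sq, hζ], by simpa using hneg⟩
  · exact ⟨ζ, hζ, hpos⟩

-- Both sides are false at `z = 0`, where `ξ / 0 = 0`.
lemma re_div_pos_iff (ξ z : ℂ) : 0 < (ξ / z).re ↔ 0 < (ξ * conj z).re := by
  rcases eq_or_ne z 0 with rfl | hz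
  · simp
  rw [div_re, ← add_div, div_pos_iff_of_pos_right (normSq_pos.2 hz)]
  simp [mul_re]

lemma convex_setOf_re_div_pos (ξ : ℂ) : Convex ℝ {z : ℂ | 0 < (ξ / z).re} := by
  simp_rw [re_div_pos_iff]
  refine convex_halfSpace_gt ⟨fun z w => ?_, fun r z => ?_⟩ 0
  · simp [mul_add]
  · simp only [real_smul, map_mul, conj_ofReal, mul_left_comm ξ, re_ofReal_mul, smul_eq_mul]

lemma re_div_pos_of_sq_eq_mul {ξ u v : ℂ} {c : ℝ} (hc : 0 < c) (h : ξ ^ 2 = c * u * v)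
    (hu : 0 < (ξ / u).re) : 0 < (ξ / v).re := by
  have hξ : ξ ≠ 0 := by rintro rfl; simp at hu
  have hv : v ≠ 0 := by rintro rfl; simp [hξ] at h
  have hu' : u ≠ 0 := by rintro rfl; simp at hu
  have : ξ / v = c * (ξ / u)⁻¹ := by
    field_simp
    linear_combination h
  rw [this, re_ofReal_mul, inv_re]
  exact mul_pos hc (div_pos hu (normSq_pos.2 (div_ne_zero hξ hu')))

lemma re_div_sub_ofReal_pos_of_mem_Icc {ξ y : ℂ} {a b θ : ℝ} (ha : 0 < (ξ / (y - a)).re)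
    (hb : 0 < (ξ / (y - b)).re) (hθ : θ ∈ Icc a b) : 0 < (ξ / (y - θ)).re := by
  let f : ℝ →ᵃ[ℝ] ℂ := AffineMap.const ℝ ℝ y - ofRealCLM.toLinearMap.toAffineMap
  have hconv : Convex ℝ {t : ℝ | 0 < (ξ / (y - t)).re} :=
    (convex_setOf_re_div_pos ξ).affine_preimage f
  exact hconv.ordConnected.out ha hb hθ

lemma mem_image_ofReal_Icc_of_add_eq_zero {a b c s : ℝ} (hab : a ≤ b) (hc : 0 < c) (hs : 0 ≤ s)
    {y : ℂ} (h : c * (y - b) + s * (y - a) = 0) : y ∈ ofReal '' Icc a b := by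
  have hcs : 0 < c + s := by linarith
  refine ⟨(c * b + s * a) / (c + s), ⟨?_, ?_⟩, ?_⟩
  · rw [le_div_iff₀ hcs]; nlinarith
  · rw [div_le_iff₀ hcs]; nlinarith
  · have : (c + s : ℂ) ≠ 0 := by exact_mod_cast hcs.ne'
    push_cast
    field_simp
    linear_combination -h

lemma mul_sub_div_sub_mem_slitPlane {a b c : ℝ} (hab : a ≤ b) (hc : 0 < c) {y : ℂ}
    (hy : y ∉ ofReal '' Icc a b) : c * (y - b) / (y - a) ∈ slitPlane := by
  have hya : y - a ≠ 0 := fun h => hy ⟨a, left_mem_Icc.2 hab, (sub_eq_zero.1 h).symm⟩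
  rw [mem_slitPlane_iff_not_le_zero, nonpos_iff]
  rintro ⟨hre, him⟩
  set w := c * (y - b) / (y - a) with hw
  have hw_real : w = (w.re : ℂ) := ext rfl (by simpa using him)
  refine hy (mem_image_ofReal_Icc_of_add_eq_zero hab hc (neg_nonneg.2 hre) ?_)
  rw [eq_div_iff hya] at hw
  push_cast
  rw [← hw_real]
  linear_combination -hw

end Complex

/-- For reals `a < b`, `c > 0` and `y ∈ ℂ \ [a,b]`, there exists `ξ` with
`ξ² = c(y−a)(y−b)` and `Re(ξ/(y−a)) > 0`; moreover any such `ξ` satisfies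
`Re(ξ/(y−θ)) > 0` for all `θ ∈ [a,b]`. -/
theorem exists_sqrt_re_pos_interval (a b c : ℝ) (hab : a < b) (hc : 0 < c)
    (y : ℂ) (hy : y ∉ (fun r : ℝ => (r : ℂ)) '' Set.Icc a b) :
    (∃ ξ : ℂ, ξ ^ 2 = (c : ℂ) * (y - (a : ℂ)) * (y - (b : ℂ))
        ∧ 0 < (ξ / (y - (a : ℂ))).re) ∧
    ∀ ξ : ℂ, ξ ^ 2 = (c : ℂ) * (y - (a : ℂ)) * (y - (b : ℂ)) →
      0 < (ξ / (y - (a : ℂ))).re →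
      ∀ θ : ℝ, θ ∈ Set.Icc a b → 0 < (ξ / (y - (θ : ℂ))).re := by
  have hya : y - a ≠ 0 := fun h => hy ⟨a, left_mem_Icc.2 hab.le, (sub_eq_zero.1 h).symm⟩
  refine ⟨?_, fun ξ hξ ha θ hθ => ?_⟩
  · obtain ⟨ζ, hζ, hre⟩ := exists_sq_eq_re_pos (mul_sub_div_sub_mem_slitPlane hab.le hc hy)
    refine ⟨ζ * (y - a), ?_, by rwa [mul_div_cancel_right₀ _ hya]⟩
    rw [mul_pow, hζ]
    field_simp
  · exact re_div_sub_ofReal_pos_of_mem_Icc ha (re_div_pos_of_sq_eq_mul hc hξ ha) hθ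
end

section
/- Let A = {a_k} be the sequence with generating function (1+x)³ / ((1−x)(1−2x)²) = ∑ a_k x^k, so a_0 = 1, a_1 = 8, a_2 = 35, a_3 = 116, a_4 = 332, .... Define L(A)_k = a_k² − a_{k−1} a_{k+1} (with L(A)_0 = a_0²). Then the sequence L³(A) is not log-concave; specifically, the fifth entry of L⁴(A) is negative. -/
/-- The operator `L` on sequences: `L(a) = {a₀², a₁² − a₀a₂, a₂² − a₁a₃, …}`. -/
def Lop (a : ℕ → ℤ) : ℕ → ℤ
  | 0 => (a 0) ^ 2
  | (k + 1) => (a (k + 1)) ^ 2 - a k * a (k + 2)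

/-- Let `a` be the sequence with generating function `(1+x)³/((1−x)(1−2x)²)`, i.e.
`a₀ = 1, a₁ = 8, a₂ = 35, a₃ = 116` and `a_{k+4} = 5a_{k+3} − 8a_{k+2} + 4a_{k+1}`.
Then `L³(a)` is not log-concave: the fifth entry of `L⁴(a)` is negative. -/
theorem L3_not_log_concave (a : ℕ → ℤ)
    (h0 : a 0 = 1) (h1 : a 1 = 8) (h2 : a 2 = 35) (h3 : a 3 = 116)
    (hrec : ∀ k : ℕ, a (k + 4) = 5 * a (k + 3) - 8 * a (k + 2) + 4 * a (k + 1)) :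
    (Lop^[4] a) 4 < 0 := by
  have h4 := hrec 0
  have h5 := hrec 1
  have h6 := hrec 2
  have h7 := hrec 3
  have h8 := hrec 4
  norm_num [h0, h1, h2, h3] at h4
  norm_num [h1, h2, h3, h4] at h5
  norm_num [h2, h3, h4, h5] at h6
  norm_num [h3, h4, h5, h6] at h7
  norm_num [h4, h5, h6, h7] at h8
  show Lop (Lop (Lop (Lop a))) 4 < 0
  simp only [Lop, h0, h1, h2, h3, h4, h5, h6, h7, h8]
  norm_num
end

section
/- Let p(x) = x³ and define q(x) = p(x)² − p(x−1)p(x+1) = x⁶ − (x−1)³(x+1)³. Then E(q) = 72x⁴ + 108x³ + 36x² + 1, and this polynomial has a non-real complex root; in particular E(q) does not have all roots in [−1, 0]. -/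
open Polynomial

/-!
Since `x⁶ - (x-1)³(x+1)³ = 3x⁴ - 3x² + 1 = 72 C(x,4) + 108 C(x,3) + 36 C(x,2) + 1`, the value of
`E` is read off termwise. For a real-rooted polynomial `c₀ + c₁x + c₂x² + ⋯` one has
`2c₀c₂ ≤ c₁²`: the defect `c₁² - 2c₀c₂` of a product `fg` is `f₀²·defect(g) + g₀²·defect(f)`,
and it is nonnegative for constants and linear factors. For `E(q)` the defect is `0 - 2·1·36 < 0`,
so `E(q)` does not split over `ℝ`, and some complex root is not real.
-/

namespace Polynomial

variable {R : Type*} [CommRing R] [LinearOrder R] [IsStrictOrderedRing R]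

theorem Splits.two_mul_coeff_zero_mul_coeff_two_le_sq {f : R[X]} (hf : f.Splits) :
    2 * f.coeff 0 * f.coeff 2 ≤ f.coeff 1 ^ 2 := by
  induction hf using Submonoid.closure_induction with
  | mem p hp => obtain ⟨a, rfl⟩ | ⟨a, rfl⟩ := hp <;> simp [coeff_X, coeff_C]
  | one => simp [coeff_one]
  | mul f g _ _ hf hg =>
    have h0 : (f * g).coeff 0 = f.coeff 0 * g.coeff 0 := mul_coeff_zero f g
    have h1 : (f * g).coeff 1 = f.coeff 0 * g.coeff 1 + f.coeff 1 * g.coeff 0 := by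
      simp [coeff_mul, Finset.Nat.antidiagonal_succ]
    have h2 : (f * g).coeff 2 =
        f.coeff 0 * g.coeff 2 + f.coeff 1 * g.coeff 1 + f.coeff 2 * g.coeff 0 := by
      simp [coeff_mul, Finset.Nat.antidiagonal_succ]
      ring
    have defect_mul : (f * g).coeff 1 ^ 2 - 2 * (f * g).coeff 0 * (f * g).coeff 2 =
        f.coeff 0 ^ 2 * (g.coeff 1 ^ 2 - 2 * g.coeff 0 * g.coeff 2) +
          g.coeff 0 ^ 2 * (f.coeff 1 ^ 2 - 2 * f.coeff 0 * f.coeff 2) := by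
      rw [h0, h1, h2]
      ring
    nlinarith [mul_nonneg (sq_nonneg (f.coeff 0)) (sub_nonneg.2 hg),
      mul_nonneg (sq_nonneg (g.coeff 0)) (sub_nonneg.2 hf)]

end Polynomial

theorem exists_im_ne_zero_aeval_eq_zero_of_not_splits {f : ℝ[X]} (hf : ¬ f.Splits) :
    ∃ z : ℂ, z.im ≠ 0 ∧ aeval z f = 0 := by
  by_contra! h
  refine hf (Splits.of_splits_map_of_injective (algebraMap ℝ ℂ).injective
    (IsAlgClosed.splits _) fun z hz ↦ ⟨z.re, Complex.ext (by simp) ?_⟩)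
  have hz : aeval z f = 0 := by
    rw [aeval_def, eval₂_eq_eval_map]
    exact (mem_roots'.1 hz).2
  have him : z.im = 0 := by_contra fun hne ↦ h z hne hz
  simp [him]

theorem sq_X_pow_three_sub_mul_eq_sum_binomPoly :
    ((X ^ 3) ^ 2 - ((X - 1) ^ 3 : ℝ[X]) * (X + 1) ^ 3) =
      (72 : ℝ) • binomPoly 4 + (108 : ℝ) • binomPoly 3 + (36 : ℝ) • binomPoly 2 + binomPoly 0 := by
  simp only [binomPoly, descPochhammer_succ_right, descPochhammer_zero, smul_eq_C_mul, ← mul_assoc,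
    ← C_mul]
  norm_num [Nat.factorial, map_ofNat]
  ring

/-- For `p(x) = x³` and `q(x) = p(x)² − p(x−1)p(x+1)`, the operator `E` (with
`E(C(x,k)) = x^k`) gives `E(q) = 72x⁴ + 108x³ + 36x² + 1`, which has a non-real root;
in particular `E(q)` does not have all of its roots in `[−1,0]`. -/
theorem Eq_of_cube_has_nonreal_root (E : Polynomial ℝ →ₗ[ℝ] Polynomial ℝ)
    (hE : ∀ k : ℕ, E (binomPoly k) = Polynomial.X ^ k) :
    E ((Polynomial.X ^ 3) ^ 2
        - ((Polynomial.X - 1) ^ 3 : Polynomial ℝ) * (Polynomial.X + 1) ^ 3)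
      = Polynomial.C (72 : ℝ) * Polynomial.X ^ 4 + Polynomial.C (108 : ℝ) * Polynomial.X ^ 3
        + Polynomial.C (36 : ℝ) * Polynomial.X ^ 2 + 1
    ∧ ∃ z : ℂ, z.im ≠ 0 ∧
        Polynomial.aeval z (E ((Polynomial.X ^ 3) ^ 2
          - ((Polynomial.X - 1) ^ 3 : Polynomial ℝ) * (Polynomial.X + 1) ^ 3)) = 0 := by
  have hEq : E ((X ^ 3) ^ 2 - ((X - 1) ^ 3 : ℝ[X]) * (X + 1) ^ 3) =
      C 72 * X ^ 4 + C 108 * X ^ 3 + C 36 * X ^ 2 + 1 := by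
    rw [sq_X_pow_three_sub_mul_eq_sum_binomPoly]
    simp only [map_add, map_smul, hE, pow_zero]
    simp only [smul_eq_C_mul]
  refine ⟨hEq, exists_im_ne_zero_aeval_eq_zero_of_not_splits fun hsplit ↦ ?_⟩
  have hcoeff := hsplit.two_mul_coeff_zero_mul_coeff_two_le_sq
  rw [hEq] at hcoeff
  norm_num [coeff_C, coeff_one] at hcoeff
end

section
/- Let p ∈ ℝ[x] satisfy p(0) = p(−1) = 0, let f = E(p), and write f(x) = x(1+x)g(x). Then f(0) = f(−1) = 0 and E(p(x)² − p(x−1)p(x+1)) = x(1+x) · ∑_{k≥0} ( (g^{(k)}(x)/k!)² − (g^{(k−1)}(x)/(k−1)!)·(g^{(k+1)}(x)/(k+1)!) ) · x^k (1+x)^k, with the convention g^{(−1)}/(−1)! := 0. -/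
open Polynomial Finset

lemma binomPoly_natDegree (k : ℕ) : (binomPoly k).natDegree = k := by
  rw [binomPoly, natDegree_C_mul (by positivity), descPochhammer_natDegree]

lemma binomPoly_ne_zero (k : ℕ) : binomPoly k ≠ 0 := by
  rw [binomPoly]
  exact mul_ne_zero (by simp [Nat.factorial_ne_zero]) (monic_descPochhammer ℝ k).ne_zero

lemma span_of_natDegree (v : ℕ → Polynomial ℝ) (h0 : ∀ k, v k ≠ 0)
    (hd : ∀ k, (v k).natDegree = k) : Submodule.span ℝ (Set.range v) = ⊤ := by
  rw [Submodule.eq_top_iff']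
  suffices H : ∀ n (p : ℝ[X]), p.natDegree = n → p ∈ Submodule.span ℝ (Set.range v) by
    intro p; exact H _ p rfl
  intro n
  induction n using Nat.strong_induction_on with
  | _ n ih =>
    intro p hn
    by_cases hp : p = 0
    · simp [hp]
    · have hlead : (v n).coeff n ≠ 0 := by
        have h := leadingCoeff_ne_zero.mpr (h0 n)
        rwa [leadingCoeff, hd] at h
      set c := p.coeff n / (v n).coeff n with hc
      have key : p = (p - c • v n) + c • v n := by ring
      have hcoeff : (p - c • v n).coeff n = 0 := by
        simp [hc, div_mul_cancel₀ _ hlead]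
      have hmem2 : v n ∈ Submodule.span ℝ (Set.range v) :=
        Submodule.subset_span ⟨n, rfl⟩
      by_cases hq : p - c • v n = 0
      · have : p = c • v n := by linear_combination (norm := module) hq
        rw [this]; exact Submodule.smul_mem _ _ hmem2
      · have hdeg : (p - c • v n).natDegree < n := by
          have h1 : (p - c • v n).natDegree ≤ n := by
            apply le_trans (natDegree_sub_le _ _)
            simp only [max_le_iff]
            exact ⟨le_of_eq hn, (natDegree_smul_le _ _).trans (le_of_eq (hd n))⟩
          rcases lt_or_eq_of_le h1 with h | h
          · exact h
          · apply absurd _ hq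
            apply leadingCoeff_eq_zero.mp
            rw [leadingCoeff, h, hcoeff]
        have := ih _ hdeg _ rfl
        rw [key]
        exact Submodule.add_mem _ this (Submodule.smul_mem _ _ hmem2)

lemma binomPoly_zero : binomPoly 0 = 1 := by simp [binomPoly, descPochhammer]

lemma fact_inv_succ (k : ℕ) :
    ((k+1 : ℕ) : ℝ) * (((k+1).factorial : ℝ))⁻¹ = ((k.factorial : ℝ))⁻¹ := by
  rw [Nat.factorial_succ]
  push_cast
  rw [mul_inv]
  rw [← mul_assoc, mul_inv_cancel₀ (by positivity), one_mul]

lemma X_mul_binomPoly (k : ℕ) :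
    X * binomPoly k = ((k+1 : ℕ) : ℝ) • binomPoly (k+1) + ((k : ℕ) : ℝ) • binomPoly k := by
  have h := descPochhammer_succ_right (R := ℝ) k
  simp only [binomPoly, smul_eq_C_mul]
  rw [h]
  rw [show (C (((k+1 : ℕ):ℝ)) * (C (((k+1).factorial : ℝ)⁻¹) * (descPochhammer ℝ k * (X - (k : ℝ[X]))))) = C ((((k+1 : ℕ)):ℝ) * (((k+1).factorial : ℝ))⁻¹) * (descPochhammer ℝ k * (X - (k : ℝ[X]))) by rw [map_mul]; ring]
  rw [fact_inv_succ]
  rw [← map_natCast (C : ℝ →+* ℝ[X]) k]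
  ring

lemma binomPoly_comp_add_one (k : ℕ) :
    (binomPoly (k+1)).comp (X + 1) = binomPoly (k+1) + binomPoly k := by
  have h1 : (descPochhammer ℝ (k+1)).comp (X + 1) = (X + 1) * descPochhammer ℝ k := by
    rw [descPochhammer_succ_left, mul_comp, X_comp, comp_assoc]
    simp
  have h2 : (X + 1) * descPochhammer ℝ k
      = descPochhammer ℝ (k+1) + (((k+1:ℕ)) : ℝ[X]) * descPochhammer ℝ k := by
    rw [descPochhammer_succ_right]
    push_cast
    ring
  simp only [binomPoly, mul_comp, C_comp, h1, h2]
  rw [mul_add, ← map_natCast (C : ℝ →+* ℝ[X]) (k+1), ← mul_assoc, ← map_mul, mul_comm _ (((k+1:ℕ):ℝ)), fact_inv_succ]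

lemma binomPoly_eval_zero (k : ℕ) : (binomPoly k).eval 0 = if k = 0 then 1 else 0 := by
  simp [binomPoly, descPochhammer_eval_zero]
  split <;> simp_all [Nat.factorial_ne_zero]

lemma descPochhammer_eval_neg_one (k : ℕ) :
    (descPochhammer ℝ k).eval (-1) = (-1)^k * k.factorial := by
  induction k with
  | zero => simp
  | succ k ih =>
    rw [descPochhammer_succ_right]
    simp only [eval_mul, ih, eval_sub, eval_X, eval_natCast, Nat.factorial_succ]
    push_cast
    ring

lemma binomPoly_eval_neg_one (k : ℕ) : (binomPoly k).eval (-1) = (-1)^k := by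
  simp [binomPoly, descPochhammer_eval_neg_one]
  rw [show ((k.factorial:ℝ))⁻¹ * ((-1)^k * k.factorial) = (-1)^k * (((k.factorial:ℝ))⁻¹ * k.factorial) by ring]
  rw [inv_mul_cancel₀ (by positivity), mul_one]

lemma span_binomPoly : Submodule.span ℝ (Set.range binomPoly) = ⊤ :=
  span_of_natDegree _ binomPoly_ne_zero binomPoly_natDegree

lemma induction_of_span (v : ℕ → Polynomial ℝ) (hv : Submodule.span ℝ (Set.range v) = ⊤)
    {P : Polynomial ℝ → Prop}
    (hb : ∀ k, P (v k)) (hzero : P 0)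
    (hadd : ∀ p q, P p → P q → P (p + q))
    (hsmul : ∀ (a : ℝ) p, P p → P (a • p)) : ∀ p, P p := by
  intro p
  have hp : p ∈ Submodule.span ℝ (Set.range v) := by rw [hv]; exact Submodule.mem_top
  exact Submodule.span_induction (p := fun x _ => P x)
    (fun x hx => by obtain ⟨k, hk⟩ := hx; exact hk ▸ hb k) hzero
    (fun x y _ _ hx hy => hadd x y hx hy) (fun a x _ hx => hsmul a x hx) hp

lemma binomPoly_induction {P : Polynomial ℝ → Prop}
    (hb : ∀ k, P (binomPoly k)) (hzero : P 0)
    (hadd : ∀ p q, P p → P q → P (p + q))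
    (hsmul : ∀ (a : ℝ) p, P p → P (a • p)) : ∀ p, P p :=
  induction_of_span _ span_binomPoly hb hzero hadd hsmul

lemma span_binomPoly_comp :
    Submodule.span ℝ (Set.range (fun k => (binomPoly k).comp (X + 1))) = ⊤ := by
  apply span_of_natDegree
  · intro k
    intro h
    apply binomPoly_ne_zero k
    have : ((binomPoly k).comp (X + 1)).comp (X - 1) = binomPoly k := by
      rw [comp_assoc]
      simp
    rw [← this, h, zero_comp]
  · intro k
    rw [natDegree_comp, binomPoly_natDegree,
      show (X + 1 : Polynomial ℝ) = X + C 1 by rw [map_one], natDegree_X_add_C, mul_one]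

section Elems
variable (E : Polynomial ℝ →ₗ[ℝ] Polynomial ℝ) (hE : ∀ k : ℕ, E (binomPoly k) = X ^ k)
include hE

lemma E_eval_zero : ∀ p : Polynomial ℝ, (E p).eval 0 = p.eval 0 := by
  apply binomPoly_induction
  · intro k
    rw [hE k, binomPoly_eval_zero]
    simp [zero_pow_eq]
  · simp [map_zero]
  · intro p q hp hq; simp [map_add, hp, hq]
  · intro a p hp; simp [map_smul, hp]

lemma E_eval_neg_one : ∀ p : Polynomial ℝ, (E p).eval (-1) = p.eval (-1) := by
  apply binomPoly_induction
  · intro k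
    rw [hE k, binomPoly_eval_neg_one]
    simp
  · simp
  · intro p q hp hq; simp [map_add, hp, hq]
  · intro a p hp; simp [map_smul, hp]

lemma E_mul_X : ∀ p : Polynomial ℝ,
    E (X * p) = X * (1 + X) * derivative (E p) + X * E p := by
  apply binomPoly_induction
  · intro k
    rw [X_mul_binomPoly, map_add, map_smul, map_smul, hE, hE]
    cases k with
    | zero => simp
    | succ k =>
      rw [derivative_X_pow, show k + 1 - 1 = k from rfl, smul_eq_C_mul, smul_eq_C_mul,
        map_natCast, map_natCast]
      push_cast
      ring
  · simp [map_zero]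
  · intro p q hp hq
    rw [mul_add, map_add, hp, hq, map_add, map_add]
    ring
  · intro a p hp
    rw [mul_smul_comm, map_smul, hp, map_smul, derivative_smul, smul_add,
      mul_smul_comm, mul_smul_comm]

lemma E_comp_sub_one : ∀ p : Polynomial ℝ,
    (X + 1) * E (p.comp (X - 1)) = X * E p + C ((E p).eval (-1)) := by
  apply induction_of_span
    (P := fun p => (X + 1) * E (p.comp (X - 1)) = X * E p + C ((E p).eval (-1)))
    _ span_binomPoly_comp
  · intro k
    have hcomp : ((binomPoly k).comp (X + 1)).comp (X - 1) = binomPoly k := by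
      rw [comp_assoc]; simp
    rw [hcomp, hE]
    cases k with
    | zero =>
      have h1 : (binomPoly 0).comp (X+1) = binomPoly 0 := by rw [binomPoly_zero]; simp
      rw [h1, hE]
      simp
    | succ k =>
      rw [binomPoly_comp_add_one, map_add, hE, hE]
      simp only [eval_add, eval_pow, eval_X]
      rw [show ((-1:ℝ))^(k+1) + (-1)^k = 0 by rw [pow_succ]; ring]
      rw [map_zero]
      ring
  · simp [map_zero]
  · intro p q hp hq
    rw [add_comp, map_add, mul_add, hp, hq, map_add, eval_add, map_add]
    ring
  · intro a p hp
    rw [smul_comp, map_smul, mul_smul_comm, hp, map_smul, eval_smul, smul_eq_mul, map_mul,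
      smul_add, mul_smul_comm, smul_eq_C_mul, smul_eq_C_mul]

lemma E_comp_add_one : ∀ p : Polynomial ℝ,
    X * E (p.comp (X + 1)) = (X + 1) * E p - C ((E p).eval 0) := by
  apply binomPoly_induction
  · intro k
    cases k with
    | zero =>
      have h1 : (binomPoly 0).comp (X+1) = binomPoly 0 := by rw [binomPoly_zero]; simp
      rw [h1, hE]
      simp
    | succ k =>
      rw [binomPoly_comp_add_one, map_add, hE, hE]
      simp only [eval_pow, eval_X, zero_pow (Nat.succ_ne_zero k), map_zero]
      ring
  · simp [map_zero]
  · intro p q hp hq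
    rw [add_comp, map_add, mul_add, hp, hq, map_add, eval_add, map_add]
    ring
  · intro a p hp
    rw [smul_comp, map_smul, mul_smul_comm, hp, map_smul, eval_smul, smul_eq_mul, map_mul,
      smul_sub, mul_smul_comm, smul_eq_C_mul, smul_eq_C_mul]

end Elems

lemma iter_vanish {F : Polynomial ℝ} {n m : ℕ} (h : derivative^[n] F = 0) (hm : n ≤ m) :
    derivative^[m] F = 0 := by
  obtain ⟨a, rfl⟩ := Nat.exists_eq_add_of_le hm
  rw [add_comm, Function.iterate_add_apply, h]
  simp

lemma iter_deriv_X_mul (F : Polynomial ℝ) :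
    ∀ k, derivative^[k+1] (X * F)
      = X * derivative^[k+1] F + C (((k+1:ℕ)):ℝ) * derivative^[k] F := by
  intro k
  induction k with
  | zero => simp [derivative_mul]; ring
  | succ k ih =>
    rw [Function.iterate_succ_apply', ih]
    rw [Function.iterate_succ_apply' derivative (k+1) F]
    simp only [derivative_add, derivative_mul, derivative_X, derivative_C, one_mul, zero_mul,
      Function.iterate_succ_apply']
    simp only [map_add, map_mul, map_pow, map_ofNat, map_natCast, map_one]
    push_cast
    ring

lemma iter_deriv_quad_mul (q q1 : Polynomial ℝ) (h1 : derivative q = q1)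
    (h2 : derivative q1 = C 2) (g : Polynomial ℝ) :
    ∀ k, derivative^[k+2] (q * g)
      = q * derivative^[k+2] g + C (((k+2:ℕ)):ℝ) * q1 * derivative^[k+1] g
        + C ((((k+2)*(k+1):ℕ)):ℝ) * derivative^[k] g := by
  intro k
  have e0 : ∀ h : Polynomial ℝ, derivative^[0] h = h := fun h => rfl
  have e1 : ∀ h : Polynomial ℝ, derivative^[1] h = derivative h := fun h => rfl
  have e2 : ∀ h : Polynomial ℝ, derivative^[2] h = derivative (derivative h) := fun h => rfl
  induction k with
  | zero =>
    show derivative (derivative (q * g)) = _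
    rw [derivative_mul, h1, derivative_add, derivative_mul, derivative_mul, h1, h2]
    simp only [e0, e1, e2]
    simp only [map_add, map_mul, map_pow, map_ofNat, map_natCast, map_one]
    push_cast
    ring
  | succ k ih =>
    rw [Function.iterate_succ_apply', ih]
    simp only [derivative_add, derivative_mul, derivative_C, h1, h2, zero_mul]
    rw [show derivative (derivative^[k+2] g) = derivative^[k+3] g from (Function.iterate_succ_apply' _ _ _).symm]
    rw [show derivative (derivative^[k+1] g) = derivative^[k+2] g from (Function.iterate_succ_apply' _ _ _).symm]
    rw [show derivative (derivative^[k] g) = derivative^[k+1] g from (Function.iterate_succ_apply' _ _ _).symm]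
    simp only [map_add, map_mul, map_pow, map_ofNat, map_natCast, map_one]
    push_cast
    ring

lemma iter_deriv_add (p q : Polynomial ℝ) (k : ℕ) :
    derivative^[k] (p + q) = derivative^[k] p + derivative^[k] q := by
  induction k with
  | zero => rfl
  | succ k ih => rw [Function.iterate_succ_apply', ih, derivative_add,
      Function.iterate_succ_apply', Function.iterate_succ_apply']

lemma deriv_u : derivative (X * (1 + X) : Polynomial ℝ) = 1 + 2*X := by
  rw [derivative_mul, derivative_X, derivative_add, derivative_one, derivative_X]
  ring

lemma deriv_u2 : derivative (1 + 2*X : Polynomial ℝ) = C 2 := by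
  rw [derivative_add, derivative_one, derivative_mul, derivative_X]
  simp
  rfl

lemma u_mul_deriv_pow (k : ℕ) :
    (X*(1+X) : Polynomial ℝ) * derivative ((X*(1+X))^k)
      = C ((k:ℕ):ℝ) * ((X*(1+X))^k * (1+2*X)) := by
  cases k with
  | zero => simp
  | succ k =>
    rw [derivative_pow_succ, deriv_u]
    simp only [Nat.cast_add, Nat.cast_one, map_add, map_natCast, map_one]
    push_cast
    ring

lemma hker (F : Polynomial ℝ) (k : ℕ) :
    derivative^[k] (X*(1+X) * derivative F + X * F)
      = X*(1+X) * derivative^[k+1] F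
        + (C ((k:ℕ):ℝ) * (1+2*X) + X) * derivative^[k] F
        + C ((k:ℕ):ℝ)^2 * derivative^[k-1] F := by
  match k with
  | 0 => simp
  | 1 =>
    have e0 : ∀ h : Polynomial ℝ, derivative^[0] h = h := fun h => rfl
    have e1 : ∀ h : Polynomial ℝ, derivative^[1] h = derivative h := fun h => rfl
    have e2 : ∀ h : Polynomial ℝ, derivative^[2] h = derivative (derivative h) := fun h => rfl
    simp only [e1, e2, show (1:ℕ) - 1 = 0 from rfl, e0]
    simp only [derivative_add, derivative_mul, derivative_X, derivative_one, Nat.cast_one,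
      map_one, derivative_ofNat, one_mul, zero_mul, mul_one, zero_add, add_zero]
    ring
  | (j+2) =>
    rw [iter_deriv_add, iter_deriv_quad_mul (X*(1+X)) (1+2*X) deriv_u deriv_u2 (derivative F) j,
      iter_deriv_X_mul F (j+1)]
    rw [← Function.iterate_succ_apply derivative (j+2) F,
      ← Function.iterate_succ_apply derivative (j+1) F,
      ← Function.iterate_succ_apply derivative j F]
    rw [show (j+2) - 1 = j+1 from rfl]
    simp only [map_add, map_mul, map_pow, map_ofNat, map_natCast, map_one]
    push_cast
    ring

lemma ck_succ (k : ℕ) :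
    C ((((k+1).factorial:ℝ)⁻¹)^2) * C ((((k+1:ℕ)):ℝ))^2 = C (((k.factorial:ℝ)⁻¹)^2) := by
  rw [← map_pow, ← map_mul]
  congr 1
  rw [← mul_pow, mul_comm (((k+1).factorial:ℝ)⁻¹) _, fact_inv_succ]

noncomputable def termS (F G : Polynomial ℝ) (k : ℕ) : Polynomial ℝ :=
  C (((k.factorial:ℝ)⁻¹)^2) * ((X*(1+X))^k * (derivative^[k] F * derivative^[k] G))

noncomputable def termA (F G : Polynomial ℝ) (k : ℕ) : Polynomial ℝ :=
  C (((k.factorial:ℝ)⁻¹)^2) * ((X*(1+X))^k * ((X*(1+X) * derivative^[k+1] F) * derivative^[k] G))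

noncomputable def termB (F G : Polynomial ℝ) (k : ℕ) : Polynomial ℝ :=
  C (((k.factorial:ℝ)⁻¹)^2) * ((X*(1+X))^k
    * (((C ((k:ℕ):ℝ) * (1+2*X) + X) * derivative^[k] F) * derivative^[k] G))

noncomputable def termT (F G : Polynomial ℝ) (j : ℕ) : Polynomial ℝ :=
  C (((j.factorial:ℝ)⁻¹)^2) * C (((j:ℕ)):ℝ)^2
    * ((X*(1+X))^j * (derivative^[j-1] F * derivative^[j] G))

lemma master_step (F G : Polynomial ℝ) (m : ℕ) (hF : derivative^[m] F = 0) :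
    X*(1+X) * derivative (∑ k ∈ Finset.range m, termS F G k)
      + X * ∑ k ∈ Finset.range m, termS F G k
    = ∑ k ∈ Finset.range (m+2), termS (X*(1+X) * derivative F + X * F) G k := by
  have hFk : ∀ k, m ≤ k → derivative^[k] F = 0 := fun k hk => iter_vanish hF hk
  have key : ∀ k, X*(1+X) * derivative (termS F G k) + X * termS F G k
      = (termA F G k + termB F G k) + termT F G (k+1) := by
    intro k
    simp only [termS, termA, termB, termT, Nat.add_sub_cancel]
    rw [derivative_C_mul, derivative_mul, derivative_mul,
      ← Function.iterate_succ_apply' derivative k F, ← Function.iterate_succ_apply' derivative k G]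
    linear_combination (C (((k.factorial:ℝ)⁻¹)^2) * (derivative^[k] F * derivative^[k] G))
        * u_mul_deriv_pow k
      - ((X*(1+X))^(k+1) * (derivative^[k] F * derivative^[k+1] G)) * ck_succ (k)
  calc X*(1+X) * derivative (∑ k ∈ Finset.range m, termS F G k)
        + X * ∑ k ∈ Finset.range m, termS F G k
      = ∑ k ∈ Finset.range m,
          (X*(1+X) * derivative (termS F G k) + X * termS F G k) := by
        rw [derivative_sum, Finset.mul_sum, Finset.mul_sum, ← Finset.sum_add_distrib]
    _ = ∑ k ∈ Finset.range m, ((termA F G k + termB F G k) + termT F G (k+1)) :=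
        Finset.sum_congr rfl fun k _ => key k
    _ = ∑ k ∈ Finset.range (m+2), (termA F G k + termB F G k)
        + ∑ k ∈ Finset.range (m+2), termT F G k := by
        rw [Finset.sum_add_distrib]
        congr 1
        · apply Finset.sum_subset (Finset.range_subset_range.mpr (by omega))
          intro k hk hk2
          simp only [Finset.mem_range, not_lt] at hk2
          simp [termA, termB, hFk k hk2, hFk (k+1) (by omega)]
        · have h1 : ∑ k ∈ Finset.range m, termT F G (k+1)
              = ∑ k ∈ Finset.range (m+1), termT F G (k+1) := by
            apply Finset.sum_subset (Finset.range_subset_range.mpr (by omega))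
            intro k hk hk2
            simp only [Finset.mem_range, not_lt] at hk2
            simp [termT, Nat.add_sub_cancel, hFk k hk2]
          have h0 : termT F G 0 = 0 := by simp [termT]
          have h2 := Finset.sum_range_succ' (termT F G) (m+1)
          rw [h0, add_zero] at h2
          rw [h1, ← h2]
    _ = ∑ k ∈ Finset.range (m+2), termS (X*(1+X) * derivative F + X * F) G k := by
        rw [← Finset.sum_add_distrib]
        apply Finset.sum_congr rfl
        intro k _
        simp only [termS, termA, termB, termT]
        rw [hker]
        ring

lemma sum_termS_trim (F G : Polynomial ℝ) {n N : ℕ} (h : derivative^[n] F = 0) (hnN : n ≤ N) :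
    ∑ k ∈ Finset.range N, termS F G k = ∑ k ∈ Finset.range n, termS F G k := by
  symm
  apply Finset.sum_subset (Finset.range_subset_range.mpr hnN)
  intro k hk hk2
  simp only [Finset.mem_range, not_lt] at hk2
  simp [termS, iter_vanish h hk2]

lemma E_mul (E : Polynomial ℝ →ₗ[ℝ] Polynomial ℝ) (hE : ∀ k : ℕ, E (binomPoly k) = X ^ k) :
    ∀ (p q : Polynomial ℝ) (n : ℕ), derivative^[n] (E p) = 0 →
      E (p * q) = ∑ k ∈ Finset.range n, termS (E p) (E q) k := by
  intro p
  induction p using Polynomial.induction_on with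
  | C a =>
    intro q n hvan
    have hCa0 : (C a : Polynomial ℝ) = a • binomPoly 0 := by
      rw [binomPoly_zero, smul_eq_C_mul, mul_one]
    have hECa : E (C a) = C a := by
      rw [hCa0, map_smul, hE, pow_zero, smul_eq_C_mul, mul_one]
      exact hCa0
    rw [hECa] at hvan
    have hCaq : E (C a * q) = C a * E q := by
      rw [← smul_eq_C_mul, map_smul, smul_eq_C_mul]
    cases n with
    | zero =>
      have ha : a = 0 := by
        have : (C a : Polynomial ℝ) = 0 := hvan
        exact (C_eq_zero).mp this
      simp [hCaq, ha]
    | succ n =>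
      rw [hCaq, hECa]
      rw [Finset.sum_eq_single_of_mem 0 (Finset.mem_range.mpr (Nat.succ_pos n))]
      · simp [termS]
      · intro k _ hk
        have : derivative^[k] (C a : Polynomial ℝ) = 0 :=
          iterate_derivative_eq_zero (by rw [natDegree_C]; exact Nat.pos_of_ne_zero hk)
        simp [termS, this]
  | add p1 p2 h1 h2 =>
    intro q n hvan
    set N := max n (max ((E p1).natDegree + 1) ((E p2).natDegree + 1)) with hN
    have hv1 : derivative^[N] (E p1) = 0 := by
      apply iterate_derivative_eq_zero
      calc (E p1).natDegree < (E p1).natDegree + 1 := Nat.lt_succ_self _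
        _ ≤ N := le_trans (le_max_left _ _) (le_max_right _ _)
    have hv2 : derivative^[N] (E p2) = 0 := by
      apply iterate_derivative_eq_zero
      calc (E p2).natDegree < (E p2).natDegree + 1 := Nat.lt_succ_self _
        _ ≤ N := le_trans (le_max_right _ _) (le_max_right _ _)
    have step : E ((p1 + p2) * q) = ∑ k ∈ Finset.range N, termS (E (p1+p2)) (E q) k := by
      rw [add_mul, map_add, h1 q N hv1, h2 q N hv2, ← Finset.sum_add_distrib]
      apply Finset.sum_congr rfl
      intro k _
      simp only [termS, map_add, iter_deriv_add]
      ring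
    rw [step, sum_termS_trim _ _ hvan (le_max_left _ _)]
  | monomial j a ih =>
    intro q n hvan
    have hXp : (C a * X^(j+1) : Polynomial ℝ) = X * (C a * X^j) := by ring
    set M := (E (C a * X^j)).natDegree + 1 with hM
    have hvr : derivative^[M] (E (C a * X^j)) = 0 :=
      iterate_derivative_eq_zero (Nat.lt_succ_self _)
    have hEXr : E (C a * X^(j+1))
        = X*(1+X) * derivative (E (C a * X^j)) + X * E (C a * X^j) := by
      rw [hXp]; exact E_mul_X E hE _
    have hv2 : derivative^[M+2] (E (C a * X^(j+1))) = 0 := by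
      rw [hEXr, hker,
        show derivative^[M+2+1] (E (C a * X^j)) = 0 from iter_vanish hvr (by omega),
        show derivative^[M+2] (E (C a * X^j)) = 0 from iter_vanish hvr (by omega),
        show derivative^[M+2-1] (E (C a * X^j)) = 0 from iter_vanish hvr (by omega)]
      simp
    have step : E (C a * X^(j+1) * q)
        = ∑ k ∈ Finset.range (M+2), termS (E (C a * X^(j+1))) (E q) k := by
      have h1 : C a * X^(j+1) * q = X * (C a * X^j * q) := by ring
      rw [h1, E_mul_X E hE, ih q M hvr, master_step _ _ M hvr, hEXr]
    rw [step, ← sum_termS_trim _ _ hv2 (le_max_right n (M+2)),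
      sum_termS_trim _ _ hvan (le_max_left n (M+2))]

lemma deriv_X_sq : derivative (X^2 : Polynomial ℝ) = 2*X := by
  rw [derivative_X_pow]
  norm_num [map_ofNat]

lemma deriv_2X : derivative (2*X : Polynomial ℝ) = C 2 := by
  simp [map_ofNat]

lemma deriv_one_add_X_sq : derivative ((1+X)^2 : Polynomial ℝ) = 2*(1+X) := by
  rw [derivative_pow]
  simp [map_ofNat]

lemma deriv_2_one_add_X : derivative (2*(1+X) : Polynomial ℝ) = C 2 := by
  simp [map_ofNat]

lemma D_zero (g : Polynomial ℝ) :
    termS (X*(1+X)*g) (X*(1+X)*g) 0 - termS (X^2*g) ((1+X)^2*g) 0 = 0 := by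
  simp only [termS, Function.iterate_zero_apply, pow_zero, Nat.factorial_zero]
  ring

lemma coeffB (i : ℕ) :
    C ((((i+2).factorial:ℝ)⁻¹)^2) * C ((((i+2)*(i+1):ℕ)):ℝ)
      = C ((i.factorial:ℝ)⁻¹) * C (((i+2).factorial:ℝ)⁻¹) := by
  rw [← map_mul, ← map_mul]
  congr 1
  have h2 : ((i+2).factorial : ℝ) = (i+2) * ((i+1) * i.factorial) := by
    rw [Nat.factorial_succ, Nat.factorial_succ]
    push_cast
    ring
  have hi : (i.factorial : ℝ) ≠ 0 := by positivity
  rw [h2]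
  push_cast
  field_simp

lemma coeffA (i : ℕ) :
    C ((((i+2).factorial:ℝ)⁻¹)^2) * C ((((i+2):ℕ)):ℝ)^2
      = C (((i+1).factorial:ℝ)⁻¹)^2 := by
  rw [ck_succ (i+1), map_pow]

lemma D_succ (g : Polynomial ℝ) (j : ℕ) :
    termS (X*(1+X)*g) (X*(1+X)*g) (j+1) - termS (X^2*g) ((1+X)^2*g) (j+1)
    = X*(1+X) * (((C ((j.factorial:ℝ)⁻¹) * derivative^[j] g)^2
        - (if j = 0 then 0 else
            (C (((j-1).factorial:ℝ)⁻¹) * derivative^[j-1] g)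
              * (C (((j+1).factorial:ℝ)⁻¹) * derivative^[j+1] g)))
        * X^j * (1+X)^j) := by
  match j with
  | 0 =>
    have e1 : ∀ h : Polynomial ℝ, derivative^[1] h = derivative h := fun h => rfl
    have h1 : derivative (X*(1+X)*g) = X*(1+X) * derivative g + (1+2*X) * g := by
      rw [derivative_mul, deriv_u]; ring
    have h2 : derivative (X^2*g) = X^2 * derivative g + (2*X) * g := by
      rw [derivative_mul, deriv_X_sq]; ring
    have h3 : derivative ((1+X)^2*g) = (1+X)^2 * derivative g + (2*(1+X)) * g := by
      rw [derivative_mul, deriv_one_add_X_sq]; ring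
    simp only [termS, e1, h1, h2, h3, Function.iterate_zero_apply, if_pos]
    norm_num
    ring
  | (i+1) =>
    simp only [termS, if_neg (Nat.succ_ne_zero i), Nat.add_sub_cancel]
    rw [show i+1+1 = i+2 from rfl]
    rw [iter_deriv_quad_mul (X*(1+X)) (1+2*X) deriv_u deriv_u2 g i,
      iter_deriv_quad_mul (X^2) (2*X) deriv_X_sq deriv_2X g i,
      iter_deriv_quad_mul ((1+X)^2) (2*(1+X)) deriv_one_add_X_sq deriv_2_one_add_X g i]
    simp only [mul_pow]
    linear_combination (X^(i+2) * (1+X)^(i+2) * (derivative^[i+1] g * derivative^[i+1] g)) * coeffA i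
      - (X^(i+2) * (1+X)^(i+2) * (derivative^[i+2] g * derivative^[i] g)) * coeffB i


/-- Lemma 2.3 of the paper: if `p(0) = p(−1) = 0`, `f = E(p)` and `f = x(1+x)g`, then
`f(0) = f(−1) = 0` and
`E(p(x)² − p(x−1)p(x+1))
  = x(1+x)·∑_k ((g^{(k)}/k!)² − (g^{(k−1)}/(k−1)!)(g^{(k+1)}/(k+1)!))·x^k(1+x)^k`,
with the convention `g^{(−1)}/(−1)! := 0`.  (The sum is finite; all terms with
`k > deg g + 1` vanish.) -/
theorem E_log_concavity_formula (E : Polynomial ℝ →ₗ[ℝ] Polynomial ℝ)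
    (hE : ∀ k : ℕ, E (binomPoly k) = Polynomial.X ^ k)
    (p : Polynomial ℝ) (hp0 : p.eval 0 = 0) (hpm1 : p.eval (-1) = 0)
    (f g : Polynomial ℝ) (hf : f = E p)
    (hg : f = Polynomial.X * (1 + Polynomial.X) * g) :
    f.eval 0 = 0 ∧ f.eval (-1) = 0 ∧
    E (p ^ 2 - p.comp (Polynomial.X - 1) * p.comp (Polynomial.X + 1))
      = Polynomial.X * (1 + Polynomial.X) *
        ∑ k ∈ Finset.range (g.natDegree + 2),
          ((Polynomial.C ((k.factorial : ℝ)⁻¹) * derivative^[k] g) ^ 2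
            - (if k = 0 then 0 else
                (Polynomial.C (((k - 1).factorial : ℝ)⁻¹) * derivative^[k - 1] g)
                  * (Polynomial.C (((k + 1).factorial : ℝ)⁻¹) * derivative^[k + 1] g)))
          * Polynomial.X ^ k * (1 + Polynomial.X) ^ k := by
  have hf0 : f.eval 0 = 0 := by rw [hf, E_eval_zero E hE p, hp0]
  have hfm1 : f.eval (-1) = 0 := by rw [hf, E_eval_neg_one E hE p, hpm1]
  refine ⟨hf0, hfm1, ?_⟩
  have hXne : (X : Polynomial ℝ) ≠ 0 := X_ne_zero
  have hX1ne : (X + 1 : Polynomial ℝ) ≠ 0 := by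
    intro h
    have h2 := congrArg (eval 0) h
    simp at h2
  have shift1 : E (p.comp (X - 1)) = X^2 * g := by
    have h := E_comp_sub_one E hE p
    rw [← hf, hfm1, map_zero, add_zero, hg] at h
    apply mul_left_cancel₀ hX1ne
    rw [h]; ring
  have shift2 : E (p.comp (X + 1)) = (1+X)^2 * g := by
    have h := E_comp_add_one E hE p
    rw [← hf, hf0, map_zero, sub_zero, hg] at h
    apply mul_left_cancel₀ hXne
    rw [h]; ring
  have hdegu : (X*(1+X) : Polynomial ℝ).natDegree ≤ 2 := by compute_degree
  have hdegX2 : (X^2 : Polynomial ℝ).natDegree ≤ 2 := natDegree_X_pow_le 2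
  have hdeg1X2 : ((1+X)^2 : Polynomial ℝ).natDegree ≤ 2 := by compute_degree
  have hv1 : derivative^[g.natDegree + 2 + 1] (X*(1+X)*g) = 0 := by
    apply iterate_derivative_eq_zero
    calc (X*(1+X)*g).natDegree ≤ (X*(1+X) : Polynomial ℝ).natDegree + g.natDegree :=
          natDegree_mul_le
      _ < g.natDegree + 2 + 1 := by omega
  have hv2 : derivative^[g.natDegree + 2 + 1] (X^2*g) = 0 := by
    apply iterate_derivative_eq_zero
    calc (X^2*g).natDegree ≤ (X^2 : Polynomial ℝ).natDegree + g.natDegree := natDegree_mul_le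
      _ < g.natDegree + 2 + 1 := by omega
  have hEp2 : E (p ^ 2 - p.comp (X - 1) * p.comp (X + 1))
      = ∑ k ∈ Finset.range (g.natDegree + 2 + 1),
          (termS (X*(1+X)*g) (X*(1+X)*g) k - termS (X^2*g) ((1+X)^2*g) k) := by
    rw [Finset.sum_sub_distrib, map_sub]
    congr 1
    · rw [sq, E_mul E hE p p (g.natDegree + 2 + 1) (by rw [← hf, hg]; exact hv1), ← hf, hg]
    · rw [E_mul E hE (p.comp (X - 1)) (p.comp (X + 1)) (g.natDegree + 2 + 1)
        (by rw [shift1]; exact hv2), shift1, shift2]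
  rw [hEp2, Finset.sum_range_succ', D_zero, add_zero,
    Finset.sum_congr rfl (fun k _ => D_succ g k), ← Finset.mul_sum]
end

section
/- For Hermite polynomials H_n: (H_k(x))² − H_{k−1}(x) H_{k+1}(x) = (k−1)! · ∑_{j=0}^{k−1} (2^{k−j}/j!) · H_j(x)² for every k ≥ 1. -/
open Polynomial Finset

/-- The physicists' Hermite polynomials: `H₀ = 1`, `H₁ = 2x`,
`H_{n+2} = 2x·H_{n+1} − 2(n+1)·H_n`. -/
noncomputable def hermiteH : ℕ → Polynomial ℝ
  | 0 => 1
  | 1 => 2 * Polynomial.X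
  | (n + 2) => 2 * Polynomial.X * hermiteH (n + 1)
      - Polynomial.C (2 * ((n : ℝ) + 1)) * hermiteH n

/-- Turán-type expansion for Hermite polynomials: for `k ≥ 1`,
`H_k² − H_{k−1}H_{k+1} = (k−1)!·∑_{j=0}^{k−1} (2^{k−j}/j!)·H_j²`
(stated with `k = m + 1`). -/
theorem hermite_turan_expansion (m : ℕ) :
    (hermiteH (m + 1)) ^ 2 - hermiteH m * hermiteH (m + 2)
      = Polynomial.C ((m.factorial : ℝ)) *
        ∑ j ∈ Finset.range (m + 1),
          Polynomial.C ((2 : ℝ) ^ (m + 1 - j) / (j.factorial : ℝ)) * (hermiteH j) ^ 2 := by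
  induction m with
  | zero =>
      simp [hermiteH, Finset.sum_range_one]
      ring
  | succ n ih =>
      have hrec2 : hermiteH (n+2) = 2*Polynomial.X*hermiteH (n+1)
          - Polynomial.C (2*((n:ℝ)+1)) * hermiteH n := rfl
      have hrec3 : hermiteH (n+3) = 2*Polynomial.X*hermiteH (n+2)
          - Polynomial.C (2*(((n:ℝ)+1)+1)) * hermiteH (n+1) := by
        show 2*Polynomial.X*hermiteH (n+2)
            - Polynomial.C (2*(((n+1:ℕ):ℝ)+1)) * hermiteH (n+1) = _
        push_cast
        ring
      have hC : Polynomial.C (2*(((n:ℝ)+1)+1)) = Polynomial.C (2*((n:ℝ)+1)) + Polynomial.C 2 := by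
        rw [← Polynomial.C_add]; congr 1; ring
      have key : hermiteH (n+2)^2 - hermiteH (n+1) * hermiteH (n+3)
          = Polynomial.C (2:ℝ) * hermiteH (n+1)^2
            + Polynomial.C (2*((n:ℝ)+1)) *
              (hermiteH (n+1)^2 - hermiteH n * hermiteH (n+2)) := by
        rw [hrec3, hC, hrec2]; ring
      have hfac : (((n+1).factorial : ℝ)) ≠ 0 := by
        exact_mod_cast (Nat.factorial_ne_zero (n+1))
      have h1 : Polynomial.C (((n+1).factorial : ℝ)) *
          (Polynomial.C ((2:ℝ) ^ (n+1+1-(n+1)) / (((n+1).factorial : ℝ))) * hermiteH (n+1)^2)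
          = Polynomial.C (2:ℝ) * hermiteH (n+1)^2 := by
        rw [← mul_assoc, ← Polynomial.C_mul]
        congr 2
        rw [show n+1+1-(n+1) = 1 by omega]
        field_simp
      have h2 : Polynomial.C (((n+1).factorial : ℝ)) *
          ∑ j ∈ Finset.range (n + 1),
            Polynomial.C ((2 : ℝ) ^ (n + 1 + 1 - j) / (j.factorial : ℝ)) * (hermiteH j) ^ 2
          = Polynomial.C (2*((n:ℝ)+1)) * (Polynomial.C ((n.factorial : ℝ)) *
            ∑ j ∈ Finset.range (n + 1),
              Polynomial.C ((2 : ℝ) ^ (n + 1 - j) / (j.factorial : ℝ)) * (hermiteH j) ^ 2) := by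
        rw [Finset.mul_sum, Finset.mul_sum, Finset.mul_sum]
        refine Finset.sum_congr rfl fun j hj => ?_
        have hjn : j ≤ n := by simpa using Nat.lt_succ_iff.mp (Finset.mem_range.mp hj)
        rw [← mul_assoc, ← mul_assoc, ← mul_assoc, ← Polynomial.C_mul, ← Polynomial.C_mul,
          ← Polynomial.C_mul]
        congr 2
        rw [show n+1+1-j = (n+1-j)+1 by omega, pow_succ, Nat.factorial_succ]
        push_cast
        ring
      rw [key, Finset.sum_range_succ, ih]
      linear_combination -h1 - h2
end

section
/- The diamond product f ⋄ g := E(E⁻¹(f) · E⁻¹(g)) satisfies (f ⋄ g)(x) = ∑_{k=0}^∞ (f^{(k)}(x)/k!) · (g^{(k)}(x)/k!) · x^k (x+1)^k for all f, g ∈ ℝ[x]. -/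
/-!
Both sides are bilinear in `(f, g)`, so it suffices to take `f = X ^ m`, `g = X ^ n`, for which
`E⁻¹` gives binomial coefficients and `f^{(k)}/k! = C(m,k) X^{m-k}`. By Vandermonde's convolution
`E⁻¹(X^a (X+1)^k) = C(x+k, a+k)`, so the claim reduces to the classical identity
`C(x,m) C(x,n) = ∑_k C(m,k) C(n,k) C(x+k, m+n)`, which only needs checking at natural `x`, where
it follows from two more applications of Vandermonde's convolution.
-/

open Polynomial Finset

namespace Nat

theorem add_choose_eq_sum_range (p q r : ℕ) :
    (p + q).choose r = ∑ i ∈ range (r + 1), p.choose i * q.choose (r - i) := by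
  rw [add_choose_eq, Finset.Nat.sum_antidiagonal_eq_sum_range_succ_mk]

theorem sum_range_choose_mul_choose_add (a x i : ℕ) :
    ∑ t ∈ range (a + 1), a.choose t * x.choose (i + t) = (a + x).choose (a + i) := by
  rw [add_choose_eq_sum_range, ← sum_range_reflect,
    ← sum_subset (range_subset_range.2 (by omega : a + 1 ≤ a + i + 1))]
  · refine sum_congr rfl fun t ht => ?_
    have ht : t ≤ a := mem_range_succ_iff.1 ht
    rw [add_tsub_cancel_right, choose_symm ht, show i + (a - t) = a + i - t by omega]
  · intro s _ hs
    rw [choose_eq_zero_of_lt (by simpa using hs), zero_mul]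

theorem sum_choose_mul_choose_mul_choose (m n i : ℕ) :
    ∑ k ∈ range (m + 1), m.choose k * n.choose k * k.choose i
      = m.choose i * (m + n - i).choose m := by
  rcases lt_or_ge m i with him | him
  · rw [choose_eq_zero_of_lt him, zero_mul]
    refine sum_eq_zero fun k hk => ?_
    rw [choose_eq_zero_of_lt (show k < i by grind), mul_zero]
  rw [range_eq_Ico, ← sum_Ico_consecutive _ (Nat.zero_le i) (by omega : i ≤ m + 1),
    sum_eq_zero fun k hk => by rw [choose_eq_zero_of_lt (mem_Ico.1 hk).2, mul_zero],
    zero_add, sum_Ico_eq_sum_range, show m + 1 - i = m - i + 1 by omega]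
  calc ∑ t ∈ range (m - i + 1), m.choose (i + t) * n.choose (i + t) * (i + t).choose i
      = ∑ t ∈ range (m - i + 1), m.choose i * ((m - i).choose t * n.choose (i + t)) := by
        refine sum_congr rfl fun t _ => ?_
        rw [mul_right_comm, choose_mul (Nat.le_add_right i t), add_tsub_cancel_left]
        ring
    _ = m.choose i * (m + n - i).choose m := by
        rw [← mul_sum, sum_range_choose_mul_choose_add, show m - i + n = m + n - i by omega,
          Nat.sub_add_cancel him]

/-- `j` is the size of the union of an `m`-subset and an `n`-subset of an `x`-set. -/
theorem choose_mul_choose_eq_sum (x m n : ℕ) :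
    x.choose m * x.choose n
      = ∑ j ∈ range (m + n + 1), m.choose (m + n - j) * j.choose m * x.choose j := by
  rcases lt_or_ge x m with hxm | hmx
  · rw [choose_eq_zero_of_lt hxm, zero_mul]
    refine (sum_eq_zero fun j _ => ?_).symm
    rcases lt_or_ge j m with hjm | hmj
    · rw [choose_eq_zero_of_lt hjm, mul_zero, zero_mul]
    · rw [choose_eq_zero_of_lt (by omega : x < j), mul_zero]
  rw [range_eq_Ico, ← sum_Ico_consecutive _ (Nat.zero_le m) (by omega : m ≤ m + n + 1),
    sum_eq_zero fun j hj => by rw [choose_eq_zero_of_lt (mem_Ico.1 hj).2, mul_zero, zero_mul],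
    zero_add, sum_Ico_eq_sum_range, show m + n + 1 - m = n + 1 by omega]
  calc x.choose m * x.choose n
      = x.choose m * ∑ t ∈ range (n + 1), (x - m).choose t * m.choose (n - t) := by
        rw [← add_choose_eq_sum_range, Nat.sub_add_cancel hmx]
    _ = _ := by
        rw [mul_sum]
        refine sum_congr rfl fun t _ => ?_
        have h := choose_mul (n := x) (Nat.le_add_right m t)
        rw [add_tsub_cancel_left] at h
        rw [← mul_assoc, ← h, show m + n - (m + t) = n - t by omega]
        ring

theorem choose_mul_choose_eq_sum_choose_add (x m n : ℕ) :
    x.choose m * x.choose n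
      = ∑ k ∈ range (m + 1), m.choose k * n.choose k * (x + k).choose (m + n) := by
  calc x.choose m * x.choose n
      = ∑ j ∈ range (m + n + 1), x.choose j *
          ∑ k ∈ range (m + 1), m.choose k * n.choose k * k.choose (m + n - j) := by
        rw [choose_mul_choose_eq_sum]
        refine sum_congr rfl fun j hj => ?_
        rw [sum_choose_mul_choose_mul_choose,
          Nat.sub_sub_self (mem_range_succ_iff.1 hj)]
        ring
    _ = _ := by
        simp only [mul_sum, add_choose_eq_sum_range x]
        rw [sum_comm]
        refine sum_congr rfl fun k _ => sum_congr rfl fun j _ => ?_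
        ring

end Nat

namespace Polynomial

theorem eq_of_eval_natCast_eq {R : Type*} [CommRing R] [IsDomain R] [CharZero R]
    {p q : R[X]} (h : ∀ x : ℕ, p.eval (x : R) = q.eval (x : R)) : p = q :=
  eq_of_infinite_eval_eq p q <| (Set.infinite_range_of_injective Nat.cast_injective).mono <| by
    rintro _ ⟨x, rfl⟩
    exact h x

theorem C_inv_factorial_mul_iterate_derivative {K : Type*} [Field K] [CharZero K]
    (k : ℕ) (f : K[X]) : C (k.factorial : K)⁻¹ * derivative^[k] f = hasseDeriv k f := by
  rw [← factorial_smul_hasseDeriv, LinearMap.smul_apply, nsmul_eq_mul, ← mul_assoc,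
    ← C_eq_natCast, ← C_mul, inv_mul_cancel₀ (by exact_mod_cast k.factorial_ne_zero), C_1,
    one_mul]

theorem hasseDeriv_X_pow {R : Type*} [Semiring R] (k n : ℕ) :
    hasseDeriv k (X ^ n : R[X]) = n.choose k • X ^ (n - k) := by
  rw [X_pow_eq_monomial, hasseDeriv_monomial, mul_one, ← nsmul_one, ← smul_monomial,
    ← X_pow_eq_monomial]

end Polynomial

theorem eval_natCast_binomPoly (j x : ℕ) : (binomPoly j).eval (x : ℝ) = x.choose j := by
  rw [binomPoly, eval_mul, eval_C, descPochhammer_eval_eq_descFactorial,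
    Nat.descFactorial_eq_factorial_mul_choose, Nat.cast_mul, ← mul_assoc,
    inv_mul_cancel₀ (by exact_mod_cast j.factorial_ne_zero), one_mul]

theorem binomPoly_comp_X_add_natCast (a k : ℕ) :
    (binomPoly (a + k)).comp (X + (k : ℝ[X]))
      = ∑ j ∈ range (k + 1), k.choose j • binomPoly (a + j) := by
  refine eq_of_eval_natCast_eq fun x => ?_
  simp only [eval_comp, eval_add, eval_X, eval_natCast, eval_finsetSum, nsmul_eq_mul, eval_mul,
    ← Nat.cast_add, eval_natCast_binomPoly, add_comm x k, add_comm a k]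
  exact_mod_cast (Nat.sum_range_choose_mul_choose_add k x a).symm

theorem binomPoly_mul_binomPoly (m n : ℕ) :
    binomPoly m * binomPoly n
      = ∑ k ∈ range (m + 1),
          (m.choose k * n.choose k) • (binomPoly (m + n)).comp (X + (k : ℝ[X])) := by
  refine eq_of_eval_natCast_eq fun x => ?_
  simp only [eval_mul, eval_comp, eval_add, eval_X, eval_natCast, eval_finsetSum, nsmul_eq_mul,
    ← Nat.cast_add, eval_natCast_binomPoly]
  exact_mod_cast Nat.choose_mul_choose_eq_sum_choose_add x m n

section

variable {E : ℝ[X] ≃ₗ[ℝ] ℝ[X]}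

theorem symm_X_pow (hE : ∀ k, E (binomPoly k) = X ^ k) (j : ℕ) : E.symm (X ^ j) = binomPoly j :=
  E.symm_apply_eq.2 (hE j).symm

theorem symm_X_pow_mul_X_add_one_pow (hE : ∀ k, E (binomPoly k) = X ^ k) (a k : ℕ) :
    E.symm (X ^ a * (X + 1) ^ k) = (binomPoly (a + k)).comp (X + (k : ℝ[X])) := by
  rw [binomPoly_comp_X_add_natCast, add_pow, mul_sum, map_sum]
  refine sum_congr rfl fun j _ => ?_
  rw [one_pow, mul_one, ← mul_assoc, ← pow_add, mul_comm, ← nsmul_eq_mul, map_nsmul,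
    symm_X_pow hE]

theorem symm_hasseDeriv_X_pow_mul (hE : ∀ k, E (binomPoly k) = X ^ k) (k m n : ℕ) :
    E.symm (hasseDeriv k (X ^ m) * hasseDeriv k (X ^ n) * X ^ k * (X + 1) ^ k)
      = (m.choose k * n.choose k) • (binomPoly (m + n)).comp (X + (k : ℝ[X])) := by
  by_cases hk : k ≤ m ∧ k ≤ n
  · have hpow : (X : ℝ[X]) ^ (m - k) * X ^ (n - k) * X ^ k = X ^ (m + n - k) := by
      rw [← pow_add, ← pow_add]
      congr 1
      omega
    rw [hasseDeriv_X_pow, hasseDeriv_X_pow, smul_mul_smul_comm, smul_mul_assoc, hpow,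
      smul_mul_assoc, map_nsmul, symm_X_pow_mul_X_add_one_pow hE, Nat.sub_add_cancel (by omega)]
  · have hc : m.choose k * n.choose k = 0 := by
      rcases not_and_or.1 hk with h | h
      · rw [Nat.choose_eq_zero_of_lt (not_le.1 h), zero_mul]
      · rw [Nat.choose_eq_zero_of_lt (not_le.1 h), mul_zero]
    rw [hasseDeriv_X_pow, hasseDeriv_X_pow, smul_mul_smul_comm, hc, zero_smul, zero_mul,
      zero_mul, map_zero, zero_smul]

theorem diamond_X_pow (hE : ∀ k, E (binomPoly k) = X ^ k) {m N : ℕ} (hm : m ≤ N) (n : ℕ) :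
    E (E.symm (X ^ m) * E.symm (X ^ n))
      = ∑ k ∈ range (N + 1),
          hasseDeriv k (X ^ m) * hasseDeriv k (X ^ n) * X ^ k * (X + 1) ^ k := by
  rw [← E.eq_symm_apply, map_sum, symm_X_pow hE, symm_X_pow hE, binomPoly_mul_binomPoly]
  simp only [symm_hasseDeriv_X_pow_mul hE]
  refine sum_subset (range_subset_range.2 (by omega)) fun k _ hk => ?_
  rw [Nat.choose_eq_zero_of_lt (by simpa using hk), zero_mul, zero_smul]

theorem diamond_eq_sum_hasseDeriv (hE : ∀ k, E (binomPoly k) = X ^ k) {N : ℕ} {f : ℝ[X]}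
    (hf : f.natDegree ≤ N) (g : ℝ[X]) :
    E (E.symm f * E.symm g)
      = ∑ k ∈ range (N + 1), hasseDeriv k f * hasseDeriv k g * X ^ k * (X + 1) ^ k := by
  refine induction_with_natDegree_le (fun p => E (E.symm p * E.symm g)
      = ∑ k ∈ range (N + 1), hasseDeriv k p * hasseDeriv k g * X ^ k * (X + 1) ^ k)
    N (by simp) (fun m r _ hm => ?_) (fun p q _ _ ihp ihq => ?_) f hf
  · induction g using Polynomial.induction_on' with
    | add p q hp hq => simp only [map_add, mul_add, add_mul, sum_add_distrib, hp, hq]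
    | monomial n s =>
      simp only [← C_mul_X_pow_eq_monomial, ← smul_eq_C_mul, map_smul, smul_mul_assoc,
        mul_smul_comm, diamond_X_pow hE hm, smul_sum]
  · simp only [map_add, add_mul, sum_add_distrib, ihp, ihq]

end

/-- Wagner's formula for the diamond product `f ⋄ g = E(E⁻¹(f)·E⁻¹(g))`:
`(f ⋄ g)(x) = ∑_k (f^{(k)}(x)/k!)(g^{(k)}(x)/k!)·x^k(x+1)^k`.
The sum is finite; terms with `k > deg f` vanish. -/
theorem diamond_product_formula (E : Polynomial ℝ ≃ₗ[ℝ] Polynomial ℝ)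
    (hE : ∀ k : ℕ, E (binomPoly k) = Polynomial.X ^ k) (f g : Polynomial ℝ) :
    E (E.symm f * E.symm g)
      = ∑ k ∈ Finset.range (f.natDegree + 1),
          (Polynomial.C ((k.factorial : ℝ)⁻¹) * derivative^[k] f)
            * (Polynomial.C ((k.factorial : ℝ)⁻¹) * derivative^[k] g)
            * Polynomial.X ^ k * (Polynomial.X + 1) ^ k := by
  simp only [C_inv_factorial_mul_iterate_derivative]
  exact diamond_eq_sum_hasseDeriv hE le_rfl g
end
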